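/- arXiv:1807.07511 — 3 statements merged into one kernel-verified Lean document; each statement's English description precedes it below -/
import Mathlib

section
/- (Discrete Dirichlet principle.) Let G be a finite graph, B ⊆ V(G) a nonempty set of vertices, and g : B → ℝ. Suppose f : V(G) → ℝ satisfies f|_B = g and f is discrete harmonic at every vertex x ∈ V(G) \ B (i.e., f(x) equals the average of f over the neighbors of x, with multiplicity for multiple edges). Then for every function h : V(G) → ℝ with h|_B = g one has Energy(f;G) ≤ Energy(h;G), where Energy(f;G) := Σ_{{x,y} ∈ E(G)} (f(x) - f(y))². -/
/-- **Discrete Dirichlet principle.**  Let `G` be a finite multigraph on vertex set `V`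
with symmetric edge multiplicities `m`, let `B` be a nonempty set of vertices and let
`f : V → ℝ` be discrete harmonic at every vertex outside `B`.  Then for every `g : V → ℝ`
agreeing with `f` on `B` one has `Energy(f; G) ≤ Energy(g; G)`, where
`Energy(f; G) = Σ_{edges {x,y}} (f x - f y)²` (each of the `m x y` parallel edges counted
once, i.e. half the sum over ordered pairs). -/
theorem discrete_dirichlet_principle
    {V : Type*} [Fintype V]
    (m : V → V → ℕ) (hsymm : ∀ x y, m x y = m y x) (hloop : ∀ x, m x x = 0)
    (B : Finset V) (hB : B.Nonempty)
    (f g : V → ℝ)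
    (hagree : ∀ x ∈ B, g x = f x)
    (hharm : ∀ x ∉ B, (∑ y, (m x y : ℝ)) * f x = ∑ y, (m x y : ℝ) * f y) :
    (1 / 2) * ∑ x, ∑ y, (m x y : ℝ) * (f x - f y) ^ 2
      ≤ (1 / 2) * ∑ x, ∑ y, (m x y : ℝ) * (g x - g y) ^ 2 := by
  set d : V → ℝ := fun x => g x - f x with hd
  -- each summand `∑_y m x y (f x - f y) * d x` vanishes
  have hA : ∀ x, (∑ y, (m x y : ℝ) * (f x - f y) * d x) = 0 := by
    intro x
    rw [← Finset.sum_mul]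
    by_cases hx : x ∈ B
    · have : d x = 0 := by simp [hd, hagree x hx]
      rw [this, mul_zero]
    · have h1 : (∑ y, (m x y : ℝ) * (f x - f y)) = 0 := by
        have h2 := hharm x hx
        simp only [mul_sub]
        rw [Finset.sum_sub_distrib, ← Finset.sum_mul]
        linarith
      rw [h1, zero_mul]
  have hA0 : (∑ x, ∑ y, (m x y : ℝ) * (f x - f y) * d x) = 0 :=
    Finset.sum_eq_zero fun x _ => hA x
  -- the other half of the cross term equals minus the first
  have hswap : (∑ x, ∑ y, (m x y : ℝ) * (f x - f y) * d y)
      = - ∑ x, ∑ y, (m x y : ℝ) * (f x - f y) * d x := by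
    rw [Finset.sum_comm, ← Finset.sum_neg_distrib]
    refine Finset.sum_congr rfl fun a _ => ?_
    rw [← Finset.sum_neg_distrib]
    refine Finset.sum_congr rfl fun b _ => ?_
    rw [hsymm]
    ring
  have key : (∑ x, ∑ y, (m x y : ℝ) * (g x - g y) ^ 2)
      = (∑ x, ∑ y, (m x y : ℝ) * (f x - f y) ^ 2)
        + (∑ x, ∑ y, (m x y : ℝ) * (d x - d y) ^ 2)
        + 2 * (∑ x, ∑ y, (m x y : ℝ) * (f x - f y) * d x)
        - 2 * (∑ x, ∑ y, (m x y : ℝ) * (f x - f y) * d y) := by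
    have e1 : ∀ x y : V, (m x y : ℝ) * (g x - g y) ^ 2
        = (m x y : ℝ) * (f x - f y) ^ 2 + (m x y : ℝ) * (d x - d y) ^ 2
          + 2 * ((m x y : ℝ) * (f x - f y) * d x)
          - 2 * ((m x y : ℝ) * (f x - f y) * d y) := by
      intro x y; simp only [hd]; ring
    simp only [e1, Finset.sum_add_distrib, Finset.sum_sub_distrib, ← Finset.mul_sum]
  have hDnn : 0 ≤ ∑ x, ∑ y, (m x y : ℝ) * (d x - d y) ^ 2 := by
    refine Finset.sum_nonneg fun x _ => Finset.sum_nonneg fun y _ => ?_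
    positivity
  rw [hswap, hA0] at key
  linarith
end

section
/- (Total variation bound via disconnection.) Let G be a finite connected graph and A ⊆ V(G) nonempty. For x ∈ V(G), let X^x be the simple random walk started from x and τ^x its first hitting time of A. Then for all x, y ∈ V(G) \ A, the total variation distance between the laws of X^x_{τ^x} and X^y_{τ^y} satisfies d_TV( X^x_{τ^x}, X^y_{τ^y} ) ≤ 1 - P[ the trace { X^x_0, …, X^x_{τ^x} } disconnects y from A in G ], where a set S disconnects y from A if every path in G from y to A passes through S. -/
/-!
Let `q` be a walk from `y` and `p` a walk from `x`, both stopped on hitting `A`. If `p` visits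
the loop erasure of `q`, exchange their tails at the first such vertex of the loop erasure,
cutting `p` at its last visit there. This preserves the product of the path weights, swaps the
endpoints and is an involution (the combinatorics behind Wilson's algorithm). If the trace of
`p` disconnects `y` from `A`, it meets the loop erasure of `q`, a path from `y` to `A`; summing
over pairs then gives `P(X^x_τ ∈ S) - P(no disconnection) ≤ P(X^y_τ ∈ S)` up to truncation
errors. By connectivity the walk avoids `A` for `T` steps with probability decaying
geometrically in `T`, so the truncations converge. The walk is only specified through its
cylinder probabilities, so events are compared using monotonicity and subadditivity alone.
-/

open MeasureTheory

namespace RandomWalk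

open Finset Filter Topology
open scoped Classical

variable {V : Type*}

noncomputable def transProb [Fintype V] (m : V → V → ℕ) (a b : V) : ℝ :=
  m a b / ∑ z, (m a z : ℝ)

noncomputable def pathWeight [Fintype V] (m : V → V → ℕ) : List V → ℝ
  | a :: b :: l => transProb m a b * pathWeight m (b :: l)
  | _ => 1

lemma exists_pos_of_connected {m : V → V → ℕ}
    (hconn : ∀ v w, Relation.ReflTransGen (fun a b => 0 < m a b) v w) {a b : V} (hab : a ≠ b)
    (v : V) : ∃ w, 0 < m v w := by
  obtain ⟨w, hvw⟩ : ∃ w, v ≠ w := if hva : v = a then ⟨b, hva ▸ hab⟩ else ⟨a, hva⟩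
  rcases (hconn v w).cases_head with h | ⟨u, hu, -⟩
  exacts [absurd h hvw, ⟨u, hu⟩]

section PathWeight

variable [Fintype V] {m : V → V → ℕ}

lemma transProb_nonneg (a b : V) : 0 ≤ transProb m a b := by
  unfold transProb; positivity

lemma cast_le_sum_cast (a b : V) : (m a b : ℝ) ≤ ∑ z, (m a z : ℝ) :=
  single_le_sum (fun z _ => Nat.cast_nonneg (m a z)) (mem_univ b)

lemma transProb_le_one (a b : V) : transProb m a b ≤ 1 :=
  div_le_one_of_le₀ (cast_le_sum_cast a b) (by positivity)

lemma transProb_pos {a b : V} (h : 0 < m a b) : 0 < transProb m a b := by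
  have h' : (0 : ℝ) < m a b := by exact_mod_cast h
  exact div_pos h' (h'.trans_le (cast_le_sum_cast a b))

lemma sum_transProb {a : V} (h : ∃ b, 0 < m a b) : ∑ b, transProb m a b = 1 := by
  obtain ⟨b, hb⟩ := h
  have hb' : (0 : ℝ) < m a b := by exact_mod_cast hb
  simp only [transProb, ← sum_div]
  exact div_self (hb'.trans_le (cast_le_sum_cast a b)).ne'

@[simp]
lemma pathWeight_singleton (a : V) : pathWeight m [a] = 1 := rfl

@[simp]
lemma pathWeight_cons_cons (a b : V) (l : List V) :
    pathWeight m (a :: b :: l) = transProb m a b * pathWeight m (b :: l) := rfl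

lemma pathWeight_nonneg : ∀ L : List V, 0 ≤ pathWeight m L
  | [] | [_] => zero_le_one
  | a :: b :: l => mul_nonneg (transProb_nonneg a b) (pathWeight_nonneg (b :: l))

lemma pathWeight_le_one : ∀ L : List V, pathWeight m L ≤ 1
  | [] | [_] => le_rfl
  | a :: b :: l =>
    mul_le_one₀ (transProb_le_one a b) (pathWeight_nonneg _) (pathWeight_le_one (b :: l))

lemma pathWeight_pos : ∀ {L : List V}, L.IsChain (fun a b => 0 < m a b) → 0 < pathWeight m L
  | [], _ | [_], _ => zero_lt_one
  | a :: b :: l, h => by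
    rw [List.isChain_cons_cons] at h
    exact mul_pos (transProb_pos h.1) (pathWeight_pos h.2)

lemma pathWeight_ofFn : ∀ {n : ℕ} (f : Fin (n + 1) → V),
    pathWeight m (List.ofFn f) = ∏ i : Fin n, transProb m (f i.castSucc) (f i.succ)
  | 0, f => by simp
  | n + 1, f => by
    have ih := pathWeight_ofFn (fun i => f i.succ)
    rw [List.ofFn_succ] at ih
    rw [List.ofFn_succ, List.ofFn_succ, pathWeight_cons_cons, ih, Fin.prod_univ_succ]
    rfl

lemma pathWeight_append [Inhabited V] : ∀ {M : List V}, M ≠ [] → ∀ R : List V,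
    pathWeight m (M ++ R) = pathWeight m M * pathWeight m (M.getI (M.length - 1) :: R)
  | [a], _, R => by simp [List.getI_cons_zero]
  | a :: b :: l, _, R => by
    rw [List.cons_append, List.cons_append, pathWeight_cons_cons, ← List.cons_append,
      pathWeight_append (List.cons_ne_nil b l), pathWeight_cons_cons, mul_assoc]
    simp [List.getI_cons_succ]

lemma pathWeight_eq_mul_take_drop (L : List V) {k : ℕ} (hk : k < L.length) :
    pathWeight m L = pathWeight m (L.take (k + 1)) * pathWeight m (L.drop k) := by
  have : Inhabited V := ⟨L[k]⟩
  have hne : L.take (k + 1) ≠ [] := by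
    simpa [List.take_eq_nil_iff] using List.ne_nil_of_length_pos (by omega)
  conv_lhs => rw [← List.take_append_drop (k + 1) L]
  rw [pathWeight_append hne, List.drop_eq_getElem_cons hk, List.getI_eq_getElem _ (by simp; omega)]
  simp [Nat.min_eq_left (show k + 1 ≤ L.length by omega)]

lemma pos_of_pathWeight_ne_zero [Inhabited V] : ∀ {L : List V}, pathWeight m L ≠ 0 →
    ∀ {i : ℕ}, i + 1 < L.length → 0 < m (L.getI i) (L.getI (i + 1))
  | a :: b :: l, h, 0, _ => by
    rw [pathWeight_cons_cons] at h
    simp only [transProb, ne_eq, mul_eq_zero, div_eq_zero_iff, Nat.cast_eq_zero, not_or] at h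
    simpa [List.getI_cons_zero, List.getI_cons_succ, Nat.pos_iff_ne_zero] using h.1.1
  | a :: b :: l, h, i + 1, hi =>
    pos_of_pathWeight_ne_zero (right_ne_zero_of_mul h) (i := i) (by simpa using hi)

end PathWeight

variable (V) in
noncomputable def listsOfLength [Fintype V] : ℕ → Finset (List V)
  | 0 => {[]}
  | t + 1 => (univ ×ˢ listsOfLength t).image fun p => p.1 :: p.2

section ListsOfLength

variable [Fintype V]

@[simp]
lemma mem_listsOfLength {t : ℕ} {L : List V} : L ∈ listsOfLength V t ↔ L.length = t := by
  induction t generalizing L with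
  | zero => simp [listsOfLength]
  | succ t ih => cases L <;> simp [listsOfLength, ih]

lemma sum_listsOfLength_succ {M : Type*} [AddCommMonoid M] (t : ℕ) (f : List V → M) :
    ∑ L ∈ listsOfLength V (t + 1), f L = ∑ v, ∑ K ∈ listsOfLength V t, f (v :: K) := by
  rw [listsOfLength, sum_image fun p _ q _ h => Prod.ext (List.cons.inj h).1 (List.cons.inj h).2,
    sum_product]

variable {m : V → V → ℕ}

lemma sum_pathWeight_append (hm : ∀ a, ∃ b, 0 < m a b) (u : ℕ) {L : List V} (hL : L ≠ []) :
    ∑ K ∈ listsOfLength V u, pathWeight m (L ++ K) = pathWeight m L := by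
  have : Inhabited V := ⟨L.head hL⟩
  induction u generalizing L with
  | zero => simp [listsOfLength]
  | succ u ih =>
    calc ∑ K ∈ listsOfLength V (u + 1), pathWeight m (L ++ K)
        = ∑ w, pathWeight m (L ++ [w]) :=
          (sum_listsOfLength_succ u _).trans <| sum_congr rfl fun w _ => by
            simpa only [List.append_assoc, List.singleton_append] using ih (L := L ++ [w]) (by simp)
      _ = pathWeight m L := by
          simp_rw [pathWeight_append hL, pathWeight_cons_cons, pathWeight_singleton, mul_one,
            ← mul_sum, sum_transProb (hm _), mul_one]

lemma sum_pathWeight_cons (hm : ∀ a, ∃ b, 0 < m a b) (v : V) (t : ℕ) :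
    ∑ K ∈ listsOfLength V t, pathWeight m (v :: K) = 1 := by
  simpa using sum_pathWeight_append hm t (L := [v]) (List.cons_ne_nil v [])

lemma sum_pathWeight_of_prefix (hm : ∀ a, ∃ b, 0 < m a b) (v : V) {l : List V} {T : ℕ}
    (hl : l.length ≤ T) :
    ∑ K ∈ listsOfLength V T, (if l <+: K then pathWeight m (v :: K) else 0)
      = pathWeight m (v :: l) := by
  have hfilter : (listsOfLength V T).filter (l <+: ·)
      = (listsOfLength V (T - l.length)).map ⟨(l ++ ·), List.append_right_injective l⟩ := by
    ext K
    simp only [mem_filter, mem_listsOfLength, Finset.mem_map, Function.Embedding.coeFn_mk]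
    constructor
    · rintro ⟨hK, K', rfl⟩
      exact ⟨K', by simp at hK; omega, rfl⟩
    · rintro ⟨K', hK', rfl⟩
      exact ⟨by simp; omega, List.prefix_append l K'⟩
  rw [← sum_filter, hfilter, sum_map]
  exact sum_pathWeight_append hm _ (List.cons_ne_nil v l)

end ListsOfLength

noncomputable def avoidWeight [Fintype V] (m : V → V → ℕ) (A : Finset V) (v : V) (T : ℕ) :
    ℝ :=
  ∑ K ∈ listsOfLength V T, if ∀ u ∈ v :: K, u ∉ A then pathWeight m (v :: K) else 0

section Avoidance

variable [Fintype V] {m : V → V → ℕ} {A : Finset V}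

lemma avoidWeight_nonneg (v : V) (T : ℕ) : 0 ≤ avoidWeight m A v T :=
  sum_nonneg fun _ _ => by split_ifs <;> simp [pathWeight_nonneg]

lemma avoidWeight_le_one (hm : ∀ a, ∃ b, 0 < m a b) (v : V) (T : ℕ) :
    avoidWeight m A v T ≤ 1 := by
  calc avoidWeight m A v T ≤ ∑ K ∈ listsOfLength V T, pathWeight m (v :: K) :=
        sum_le_sum fun _ _ => by split_ifs <;> simp [pathWeight_nonneg]
    _ = 1 := sum_pathWeight_cons hm v T

lemma avoidWeight_of_mem {v : V} (hv : v ∈ A) (T : ℕ) : avoidWeight m A v T = 0 :=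
  sum_eq_zero fun _ _ => if_neg fun h => h v List.mem_cons_self hv

lemma avoidWeight_zero (v : V) : avoidWeight m A v 0 = if v ∈ A then 0 else 1 := by
  simp [avoidWeight, listsOfLength]

lemma avoidWeight_succ (v : V) (T : ℕ) :
    avoidWeight m A v (T + 1)
      = if v ∈ A then 0 else ∑ w, transProb m v w * avoidWeight m A w T := by
  split_ifs with hv
  · exact avoidWeight_of_mem hv _
  · simp only [avoidWeight, sum_listsOfLength_succ, mul_sum, List.forall_mem_cons, hv,
      not_false_eq_true, true_and, pathWeight_cons_cons, mul_ite, mul_zero]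

lemma avoidWeight_add_le {u : ℕ} {c : ℝ} (hc : ∀ w, avoidWeight m A w u ≤ c) (s : ℕ)
    (v : V) :
    avoidWeight m A v (s + u) ≤ avoidWeight m A v s * c := by
  induction s generalizing v with
  | zero =>
    by_cases hv : v ∈ A
    · simp [avoidWeight_of_mem hv]
    · simpa [avoidWeight_zero, hv] using hc v
  | succ s ih =>
    rw [Nat.add_right_comm, avoidWeight_succ, avoidWeight_succ]
    split_ifs
    · simp
    · rw [sum_mul]
      exact sum_le_sum fun w _ => by
        rw [mul_assoc]; exact mul_le_mul_of_nonneg_left (ih w) (transProb_nonneg v w)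

lemma avoidWeight_antitone (hm : ∀ a, ∃ b, 0 < m a b) (v : V) :
    Antitone (avoidWeight m A v) :=
  antitone_nat_of_succ_le fun T => by
    simpa using avoidWeight_add_le (fun w => avoidWeight_le_one hm w 1) T v

lemma avoidWeight_le_pow (hm : ∀ a, ∃ b, 0 < m a b) {T₀ : ℕ} {c : ℝ} (hc0 : 0 ≤ c)
    (hc : ∀ w, avoidWeight m A w T₀ ≤ c) (v : V) (k : ℕ) :
    avoidWeight m A v (k * T₀) ≤ c ^ k := by
  induction k with
  | zero => simpa using avoidWeight_le_one hm v 0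
  | succ k ih =>
    rw [Nat.succ_mul, pow_succ]
    exact (avoidWeight_add_le hc _ v).trans (mul_le_mul_of_nonneg_right ih hc0)

lemma avoidWeight_le_one_sub (hm : ∀ a, ∃ b, 0 < m a b) {v : V} {l : List V}
    {T : ℕ} (hA : ∃ u ∈ v :: l, u ∈ A) (hl : l.length ≤ T) :
    avoidWeight m A v T ≤ 1 - pathWeight m (v :: l) := by
  have hterm : ∀ K : List V,
      (if ∀ u ∈ v :: K, u ∉ A then pathWeight m (v :: K) else 0)
        ≤ pathWeight m (v :: K) - if l <+: K then pathWeight m (v :: K) else 0 := by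
    intro K
    by_cases hK : l <+: K
    · have : ¬ ∀ u ∈ v :: K, u ∉ A := fun h =>
        let ⟨u, hu, huA⟩ := hA; h u ((List.cons_prefix_cons.mpr ⟨rfl, hK⟩).subset hu) huA
      rw [if_neg this, if_pos hK, sub_self]
    · split_ifs <;> simp [pathWeight_nonneg]
  calc avoidWeight m A v T
      ≤ ∑ K ∈ listsOfLength V T,
          (pathWeight m (v :: K) - if l <+: K then pathWeight m (v :: K) else 0) :=
        sum_le_sum fun K _ => hterm K
    _ = 1 - pathWeight m (v :: l) := by
        rw [sum_sub_distrib, sum_pathWeight_cons hm, sum_pathWeight_of_prefix hm v hl]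

/-- Every vertex reaches `A` within `T₀` steps with probability at least `1 - c > 0`, so avoiding
`A` for `k * T₀` steps has probability at most `c ^ k`. -/
theorem tendsto_avoidWeight [Nonempty V] (hm : ∀ a, ∃ b, 0 < m a b)
    (hreach : ∀ v, ∃ a ∈ A, Relation.ReflTransGen (fun a b => 0 < m a b) v a) (v : V) :
    Tendsto (avoidWeight m A v) atTop (𝓝 0) := by
  have hchain : ∀ w, ∃ l : List V, (w :: l).IsChain (fun a b => 0 < m a b) ∧
      ∃ u ∈ w :: l, u ∈ A := fun w => by
    obtain ⟨a, ha, hwa⟩ := hreach w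
    obtain ⟨l, hl, hlast⟩ := List.exists_isChain_cons_of_relationReflTransGen hwa
    exact ⟨l, hl, a, hlast ▸ List.getLast_mem _, ha⟩
  choose l hl hlA using hchain
  set T₀ := univ.sup (fun w => (l w).length) + 1
  obtain ⟨w₀, -, hmax⟩ :=
    exists_max_image univ (fun w => 1 - pathWeight m (w :: l w)) univ_nonempty
  have hT₀ : T₀ ≠ 0 := Nat.succ_ne_zero _
  set c := 1 - pathWeight m (w₀ :: l w₀)
  have hc0 : 0 ≤ c := sub_nonneg.mpr (pathWeight_le_one _)
  have hc1 : c < 1 := sub_lt_self 1 (pathWeight_pos (hl w₀))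
  have hc : ∀ w, avoidWeight m A w T₀ ≤ c := fun w =>
    (avoidWeight_le_one_sub hm (hlA w)
      (Nat.le_succ_of_le (le_sup (f := fun w => (l w).length) (mem_univ w)))).trans
      (hmax w (mem_univ w))
  have hbound : ∀ T, avoidWeight m A v T ≤ c ^ (T / T₀) := fun T =>
    (avoidWeight_antitone hm v (Nat.div_mul_le_self T T₀)).trans
      (avoidWeight_le_pow hm hc0 hc v _)
  exact tendsto_of_tendsto_of_tendsto_of_le_of_le tendsto_const_nhds
    ((tendsto_pow_atTop_nhds_zero_of_lt_one hc0 hc1).comp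
      (Nat.tendsto_div_const_atTop hT₀))
    (avoidWeight_nonneg v) hbound

end Avoidance

section Lists

lemma map_range_prefix {f : ℕ → V} {a b : ℕ} (h : a ≤ b) :
    (List.range a).map f <+: (List.range b).map f := by
  rw [List.prefix_iff_eq_take, List.length_map, List.length_range, ← List.map_take,
    List.take_range, Nat.min_eq_left h]

variable [Inhabited V]

lemma mem_iff_getI {L : List V} {v : V} : v ∈ L ↔ ∃ t < L.length, L.getI t = v := by
  simp only [List.mem_iff_getElem]
  exact exists_congr fun t => ⟨fun ⟨h, he⟩ => ⟨h, by rw [List.getI_eq_getElem _ h, he]⟩,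
    fun ⟨h, he⟩ => ⟨h, by rw [← List.getI_eq_getElem _ h, he]⟩⟩

lemma getI_take {L : List V} {i k : ℕ} (hik : i < k) : (L.take k).getI i = L.getI i := by
  simp [List.getI_eq_getElem?_getD, hik]

lemma getI_drop (L : List V) (k i : ℕ) : (L.drop k).getI i = L.getI (k + i) := by
  simp [List.getI_eq_getElem?_getD, List.getElem?_drop]

lemma mem_drop_iff_getI {L : List V} {k : ℕ} {v : V} :
    v ∈ L.drop k ↔ ∃ t, k ≤ t ∧ t < L.length ∧ L.getI t = v := by
  rw [mem_iff_getI]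
  constructor
  · rintro ⟨u, hu, rfl⟩
    exact ⟨k + u, by omega, by simp at hu; omega, (getI_drop L k u).symm⟩
  · rintro ⟨t, hkt, ht, rfl⟩
    exact ⟨t - k, by simp; omega, by rw [getI_drop, Nat.add_sub_cancel' hkt]⟩

lemma getI_of_prefix {L M : List V} (h : L <+: M) {i : ℕ} (hi : i < L.length) :
    M.getI i = L.getI i := by
  obtain ⟨t, rfl⟩ := h
  exact List.getI_append _ _ _ hi

lemma getI_map_range {f : ℕ → V} {N i : ℕ} (hi : i < N) :
    ((List.range N).map f).getI i = f i := by
  rw [List.getI_eq_getElem _ (by simpa using hi), List.getElem_map, List.getElem_range]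

lemma getI_last_map_range (f : ℕ → V) (n : ℕ) :
    ((List.range (n + 1)).map f).getI (((List.range (n + 1)).map f).length - 1) = f n := by
  simp [getI_map_range]

end Lists

section LoopErasure

variable [Inhabited V]

/-- `0` if `v ∉ L`. -/
noncomputable def lastIdx (L : List V) (v : V) : ℕ :=
  Nat.findGreatest (fun i => L.getI i = v) (L.length - 1)

lemma lastIdx_le (L : List V) (v : V) : lastIdx L v ≤ L.length - 1 :=
  Nat.findGreatest_le _

lemma le_lastIdx {L : List V} {v : V} {k : ℕ} (hk : k ≤ L.length - 1) (h : L.getI k = v) :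
    k ≤ lastIdx L v :=
  Nat.le_findGreatest hk h

lemma getI_lastIdx {L : List V} {v : V} (h : v ∈ L) : L.getI (lastIdx L v) = v := by
  obtain ⟨t, ht, rfl⟩ := mem_iff_getI.mp h
  exact Nat.findGreatest_spec (P := fun i => L.getI i = L.getI t) (by omega) rfl

lemma getI_ne_of_lastIdx_lt {L : List V} {v : V} {t : ℕ} (h₁ : lastIdx L v < t)
    (h₂ : t ≤ L.length - 1) : L.getI t ≠ v :=
  Nat.findGreatest_is_greatest h₁ h₂

lemma not_mem_drop_lastIdx (L : List V) (v : V) : v ∉ L.drop (lastIdx L v + 1) := by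
  rw [mem_drop_iff_getI]
  rintro ⟨t, ht, htL, rfl⟩
  exact getI_ne_of_lastIdx_lt ht (by omega) rfl

lemma lastIdx_eq {L : List V} {k : ℕ} (hk : k < L.length) (hdrop : L.getI k ∉ L.drop (k + 1)) :
    lastIdx L (L.getI k) = k := by
  refine le_antisymm ?_ (le_lastIdx (by omega) rfl)
  by_contra! hlt
  exact hdrop (mem_drop_iff_getI.mpr ⟨_, hlt, by have := lastIdx_le L (L.getI k); omega,
    getI_lastIdx (mem_iff_getI.mpr ⟨k, hk, rfl⟩)⟩)

/-- The successive times of the chronological loop erasure of `L`: each one is the last visit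
to the vertex following the previous one; the sequence stalls at the final index. -/
noncomputable def eraseTime (L : List V) : ℕ → ℕ
  | 0 => lastIdx L (L.getI 0)
  | i + 1 => if eraseTime L i < L.length - 1
      then lastIdx L (L.getI (eraseTime L i + 1))
      else eraseTime L i

lemma eraseTime_le (L : List V) (i : ℕ) : eraseTime L i ≤ L.length - 1 := by
  induction i with
  | zero => exact lastIdx_le L _
  | succ i ih =>
    rw [eraseTime]
    split_ifs
    exacts [lastIdx_le L _, ih]

lemma getI_eraseTime_zero (L : List V) : L.getI (eraseTime L 0) = L.getI 0 :=
  Nat.findGreatest_spec (P := fun i => L.getI i = L.getI 0) (Nat.zero_le _) rfl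

lemma eraseTime_succ_of_lt (L : List V) {i : ℕ} (h : eraseTime L i < L.length - 1) :
    eraseTime L (i + 1) = lastIdx L (L.getI (eraseTime L i + 1)) := by
  rw [eraseTime, if_pos h]

lemma lt_eraseTime_succ (L : List V) {i : ℕ} (h : eraseTime L i < L.length - 1) :
    eraseTime L i < eraseTime L (i + 1) := by
  rw [eraseTime_succ_of_lt L h]
  exact le_lastIdx (by omega) rfl

lemma getI_eraseTime_succ (L : List V) {i : ℕ} (h : eraseTime L i < L.length - 1) :
    L.getI (eraseTime L (i + 1)) = L.getI (eraseTime L i + 1) := by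
  rw [eraseTime_succ_of_lt L h]
  exact getI_lastIdx (mem_iff_getI.mpr ⟨_, by omega, rfl⟩)

lemma eraseTime_succ_of_not_lt (L : List V) {i : ℕ} (h : ¬ eraseTime L i < L.length - 1) :
    eraseTime L (i + 1) = eraseTime L i := by
  rw [eraseTime, if_neg h]

lemma eraseTime_mono (L : List V) : Monotone (eraseTime L) :=
  monotone_nat_of_le_succ fun i => by
    by_cases h : eraseTime L i < L.length - 1
    · exact (lt_eraseTime_succ L h).le
    · rw [eraseTime_succ_of_not_lt L h]

lemma getI_ne_getI_eraseTime (L : List V) {i t : ℕ} (h₁ : eraseTime L i < t)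
    (h₂ : t ≤ L.length - 1) : L.getI t ≠ L.getI (eraseTime L i) := by
  cases i with
  | zero => rw [getI_eraseTime_zero]; exact getI_ne_of_lastIdx_lt h₁ h₂
  | succ i =>
    by_cases h : eraseTime L i < L.length - 1
    · rw [getI_eraseTime_succ L h]
      rw [eraseTime_succ_of_lt L h] at h₁
      exact getI_ne_of_lastIdx_lt h₁ h₂
    · rw [eraseTime_succ_of_not_lt L h] at h₁
      have := eraseTime_le L i
      omega

lemma exists_eraseTime_eq (L : List V) : ∃ i, eraseTime L i = L.length - 1 := by
  have key : ∀ i, eraseTime L i = L.length - 1 ∨ i ≤ eraseTime L i := by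
    intro i
    induction i with
    | zero => right; omega
    | succ i ih =>
      by_cases hlt : eraseTime L i < L.length - 1
      · have := lt_eraseTime_succ L hlt
        omega
      · have := eraseTime_le L i
        rw [eraseTime_succ_of_not_lt L hlt]
        omega
  rcases key (L.length - 1) with h | h
  · exact ⟨_, h⟩
  · exact ⟨_, le_antisymm (eraseTime_le L _) h⟩

noncomputable def eraseCount (L : List V) : ℕ := Nat.find (exists_eraseTime_eq L)

lemma eraseTime_eraseCount (L : List V) : eraseTime L (eraseCount L) = L.length - 1 :=
  Nat.find_spec (exists_eraseTime_eq L)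

lemma eraseTime_lt_of_lt_eraseCount {L : List V} {i : ℕ} (h : i < eraseCount L) :
    eraseTime L i < L.length - 1 :=
  lt_of_le_of_ne (eraseTime_le L i) (Nat.find_min (exists_eraseTime_eq L) h)

lemma eraseTime_lt_length {L : List V} (hL : L ≠ []) (i : ℕ) : eraseTime L i < L.length := by
  have := eraseTime_le L i; have := List.length_pos_iff.mpr hL; omega

lemma getI_eraseTime_not_mem_drop (L : List V) (i : ℕ) :
    L.getI (eraseTime L i) ∉ L.drop (eraseTime L i + 1) := by
  rw [mem_drop_iff_getI]
  rintro ⟨t, ht, htL, he⟩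
  exact getI_ne_getI_eraseTime L ht (by omega) he

end LoopErasure

structure IsStoppedPath [Inhabited V] (A : Finset V) (z : V) (L : List V) : Prop where
  ne_nil : L ≠ []
  getI_zero : L.getI 0 = z
  getI_not_mem : ∀ i, i + 1 < L.length → L.getI i ∉ A
  getI_last_mem : L.getI (L.length - 1) ∈ A

def splice (q p : List V) (k s : ℕ) : List V := q.take (k + 1) ++ p.drop (s + 1)

section Splice

variable {q p : List V} {k s : ℕ}

lemma length_splice (hk : k < q.length) :
    (splice q p k s).length = k + 1 + (p.length - (s + 1)) := by
  simp [splice]; omega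

lemma length_splice_add (hk : k < q.length) (hs : s < p.length) :
    (splice q p k s).length + (splice p q s k).length = q.length + p.length := by
  rw [length_splice hk, length_splice hs]; omega

lemma splice_self_last (hq : q ≠ []) (hp : p ≠ []) :
    splice q p (q.length - 1) (p.length - 1) = q := by
  have := List.length_pos_iff.mpr hq
  have := List.length_pos_iff.mpr hp
  simp [splice, Nat.sub_add_cancel (by omega : 1 ≤ q.length),
    Nat.sub_add_cancel (by omega : 1 ≤ p.length)]

lemma splice_splice (hk : k < q.length) (hs : s < p.length) :
    splice (splice q p k s) (splice p q s k) k s = q := by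
  rw [splice, splice, splice, List.take_left' (by simp; omega), List.drop_left' (by simp; omega),
    List.take_append_drop]

variable [Inhabited V]

lemma getI_splice_of_le (hk : k < q.length) {i : ℕ} (hi : i ≤ k) :
    (splice q p k s).getI i = q.getI i := by
  rw [splice, List.getI_append _ _ _ (by simp; omega), getI_take (by omega)]

lemma getI_splice_add (hk : k < q.length) (u : ℕ) :
    (splice q p k s).getI (k + 1 + u) = p.getI (s + 1 + u) := by
  rw [splice, List.getI_append_right _ _ _ (by simp), getI_drop]
  congr 2
  simp; omega

lemma getI_last_splice (hk : k < q.length) (hs : s < p.length - 1) :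
    (splice q p k s).getI ((splice q p k s).length - 1) = p.getI (p.length - 1) := by
  rw [length_splice hk, show k + 1 + (p.length - (s + 1)) - 1 = k + 1 + (p.length - s - 2) by omega,
    getI_splice_add hk]
  congr 1; omega

lemma IsStoppedPath.splice {A : Finset V} {x y : V} (hq : IsStoppedPath A y q)
    (hp : IsStoppedPath A x p) (hk : k < q.length - 1) (hs : s < p.length - 1) :
    IsStoppedPath A y (splice q p k s) where
  ne_nil := List.ne_nil_of_length_pos (by rw [length_splice (by omega)]; omega)
  getI_zero := by rw [getI_splice_of_le (by omega) (Nat.zero_le k), hq.getI_zero]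
  getI_not_mem i hi := by
    rw [length_splice (by omega)] at hi
    by_cases hik : i ≤ k
    · rw [getI_splice_of_le (by omega) hik]
      exact hq.getI_not_mem i (by omega)
    · obtain ⟨u, rfl⟩ : ∃ u, i = k + 1 + u := ⟨i - (k + 1), by omega⟩
      rw [getI_splice_add (by omega)]
      exact hp.getI_not_mem _ (by omega)
  getI_last_mem := by rw [getI_last_splice (by omega) hs]; exact hp.getI_last_mem

variable [Fintype V] {m : V → V → ℕ}

lemma pathWeight_splice (hk : k < q.length) (hs : s < p.length) (hb : q.getI k = p.getI s) :
    pathWeight m (splice q p k s) = pathWeight m (q.take (k + 1)) * pathWeight m (p.drop s) := by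
  have hne : q.take (k + 1) ≠ [] := by
    simpa [List.take_eq_nil_iff] using List.ne_nil_of_length_pos (by omega)
  rw [splice, pathWeight_append hne, List.drop_eq_getElem_cons hs,
    ← List.getI_eq_getElem _ hs, ← hb, List.length_take, Nat.min_eq_left (by omega),
    Nat.add_sub_cancel, getI_take (Nat.lt_succ_self k)]

lemma pathWeight_splice_mul (hk : k < q.length) (hs : s < p.length) (hb : q.getI k = p.getI s) :
    pathWeight m (splice q p k s) * pathWeight m (splice p q s k)
      = pathWeight m q * pathWeight m p := by
  rw [pathWeight_splice hk hs hb, pathWeight_splice hs hk hb.symm,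
    pathWeight_eq_mul_take_drop q hk, pathWeight_eq_mul_take_drop p hs]
  ring

end Splice

section ErasureSwap

variable [Inhabited V]

lemma eraseTime_splice {q p : List V} {j s : ℕ} (hq : q ≠ []) (hj : j ≤ eraseCount q)
    (hp : ∀ i ≤ j, q.getI (eraseTime q i) ∉ p.drop (s + 1)) {i : ℕ} (hi : i ≤ j) :
    eraseTime (splice q p (eraseTime q j) s) i = eraseTime q i := by
  set k := eraseTime q j
  have hk : k < q.length := eraseTime_lt_length hq j
  have hlen : k + 1 ≤ (splice q p k s).length := by rw [length_splice hk]; omega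
  have hlast : ∀ i ≤ j, lastIdx (splice q p k s) (q.getI (eraseTime q i)) = eraseTime q i := by
    intro i hi
    have hek : eraseTime q i ≤ k := eraseTime_mono q hi
    rw [← getI_splice_of_le hk hek]
    refine lastIdx_eq (by omega) fun hmem => ?_
    rw [getI_splice_of_le hk hek, splice, List.drop_append_of_le_length (by simp; omega),
      List.drop_take] at hmem
    rcases List.mem_append.mp hmem with h | h
    · exact getI_eraseTime_not_mem_drop q i (List.mem_of_mem_take h)
    · exact hp i hi h
  induction i with
  | zero =>
    rw [eraseTime, getI_splice_of_le hk (Nat.zero_le k), ← getI_eraseTime_zero q, hlast 0 hi]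
  | succ i ih =>
    have hlt : eraseTime q i < q.length - 1 := eraseTime_lt_of_lt_eraseCount (by omega)
    have hle : eraseTime q i + 1 ≤ k := (lt_eraseTime_succ q hlt).trans_le (eraseTime_mono q hi)
    have hlt' : eraseTime (splice q p k s) i < (splice q p k s).length - 1 := by
      rw [ih (by omega)]; omega
    rw [eraseTime_succ_of_lt (splice q p k s) hlt', ih (by omega), getI_splice_of_le hk hle,
      ← getI_eraseTime_succ q hlt, hlast (i + 1) hi]

def MeetsErasure (q p : List V) : Prop := ∃ i ≤ eraseCount q, q.getI (eraseTime q i) ∈ p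

/-- Exchange the tails of `q` and `p` at the first point of the loop erasure of `q` visited by
`p`, cutting `p` at its last visit there. -/
noncomputable def erasureSwap (qp : List V × List V) : List V × List V :=
  if h : MeetsErasure qp.1 qp.2 then
    let k := eraseTime qp.1 (Nat.find h)
    let s := lastIdx qp.2 (qp.1.getI k)
    (splice qp.1 qp.2 k s, splice qp.2 qp.1 s k)
  else qp

lemma erasureSwap_eq {q p : List V} {j : ℕ} (hj : j ≤ eraseCount q)
    (hmem : q.getI (eraseTime q j) ∈ p) (hmin : ∀ i < j, q.getI (eraseTime q i) ∉ p) :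
    erasureSwap (q, p) =
      (splice q p (eraseTime q j) (lastIdx p (q.getI (eraseTime q j))),
        splice p q (lastIdx p (q.getI (eraseTime q j))) (eraseTime q j)) := by
  have h : MeetsErasure q p := ⟨j, hj, hmem⟩
  have hfind : Nat.find h = j :=
    (Nat.find_eq_iff h).mpr ⟨⟨hj, hmem⟩, fun i hi ⟨_, hi'⟩ => hmin i hi hi'⟩
  simp only [erasureSwap, dif_pos h, hfind]

variable {q p : List V}

lemma getI_eraseTime_not_mem_splice {i k s : ℕ} (hik : eraseTime q i ≤ k)
    (hp : q.getI (eraseTime q i) ∉ p) : q.getI (eraseTime q i) ∉ splice p q s k := fun h => by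
  rcases List.mem_append.mp h with h | h
  · exact hp (List.mem_of_mem_take h)
  · exact getI_eraseTime_not_mem_drop q i (List.drop_subset_drop_left q (by omega) h)

lemma lastIdx_splice_eraseTime {j s : ℕ} (hs : s < p.length)
    (hb : p.getI s = q.getI (eraseTime q j)) :
    lastIdx (splice p q s (eraseTime q j)) (q.getI (eraseTime q j)) = s := by
  conv_lhs => rw [← hb, ← getI_splice_of_le (p := q) (s := eraseTime q j) hs le_rfl]
  refine lastIdx_eq (by rw [length_splice hs]; omega) ?_
  rw [getI_splice_of_le hs le_rfl, hb, splice, List.drop_left' (by simp; omega)]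
  exact getI_eraseTime_not_mem_drop q j

lemma erasureSwap_splice (hq : q ≠ []) {j : ℕ} (hj : j ≤ eraseCount q)
    (hmem : q.getI (eraseTime q j) ∈ p) (hmin : ∀ i < j, q.getI (eraseTime q i) ∉ p) :
    MeetsErasure (splice q p (eraseTime q j) (lastIdx p (q.getI (eraseTime q j))))
        (splice p q (lastIdx p (q.getI (eraseTime q j))) (eraseTime q j)) ∧
      erasureSwap (splice q p (eraseTime q j) (lastIdx p (q.getI (eraseTime q j))),
        splice p q (lastIdx p (q.getI (eraseTime q j))) (eraseTime q j)) = (q, p) := by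
  set k := eraseTime q j
  set b := q.getI k
  set s := lastIdx p b
  have hk : k < q.length := eraseTime_lt_length hq j
  have hs : s < p.length := by
    have := lastIdx_le p b; have := List.length_pos_of_mem hmem; omega
  have hagree : ∀ i ≤ j, eraseTime (splice q p k s) i = eraseTime q i := fun i hi =>
    eraseTime_splice hq hj (fun i' hi' hdrop => (lt_or_eq_of_le hi').elim
      (fun hlt => hmin i' hlt (List.mem_of_mem_drop hdrop))
      (fun heq => by rw [heq] at hdrop; exact not_mem_drop_lastIdx p b hdrop)) hi
  have hpoint : ∀ i ≤ j,
      (splice q p k s).getI (eraseTime (splice q p k s) i) = q.getI (eraseTime q i) :=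
    fun i hi => by rw [hagree i hi, getI_splice_of_le hk (eraseTime_mono q hi)]
  have hj' : j ≤ eraseCount (splice q p k s) := (Nat.le_find_iff _ _).mpr fun i hi heq => by
    have hlt : eraseTime q i < k :=
      (lt_eraseTime_succ q (eraseTime_lt_of_lt_eraseCount (by omega))).trans_le
        (eraseTime_mono q hi)
    rw [hagree i hi.le, length_splice hk] at heq
    omega
  have hmem' : b ∈ splice p q s k := mem_iff_getI.mpr
    ⟨s, by rw [length_splice hs]; omega, by rw [getI_splice_of_le hs le_rfl, getI_lastIdx hmem]⟩
  have hmin' : ∀ i < j, q.getI (eraseTime q i) ∉ splice p q s k := fun i hi =>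
    getI_eraseTime_not_mem_splice (eraseTime_mono q hi.le) (hmin i hi)
  have hs' : lastIdx (splice p q s k) b = s := lastIdx_splice_eraseTime hs (getI_lastIdx hmem)
  refine ⟨⟨j, hj', by rw [hpoint j le_rfl]; exact hmem'⟩, ?_⟩
  rw [erasureSwap_eq hj' (by rw [hpoint j le_rfl]; exact hmem')
      (fun i hi => by rw [hpoint i hi.le]; exact hmin' i hi),
    hpoint j le_rfl, hagree j le_rfl, hs', splice_splice hk hs, splice_splice hs hk]

lemma exists_erasureSwap_eq (h : MeetsErasure q p) :
    ∃ j ≤ eraseCount q, q.getI (eraseTime q j) ∈ p ∧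
      (∀ i < j, q.getI (eraseTime q i) ∉ p) ∧
      erasureSwap (q, p) =
        (splice q p (eraseTime q j) (lastIdx p (q.getI (eraseTime q j))),
          splice p q (lastIdx p (q.getI (eraseTime q j))) (eraseTime q j)) := by
  obtain ⟨hj, hmem⟩ := Nat.find_spec h
  have hmin : ∀ i < Nat.find h, q.getI (eraseTime q i) ∉ p :=
    fun _ hi hmem' => Nat.find_min h hi ⟨(hi.trans_le hj).le, hmem'⟩
  exact ⟨_, hj, hmem, hmin, erasureSwap_eq hj hmem hmin⟩

lemma meetsErasure_erasureSwap (hq : q ≠ []) (h : MeetsErasure q p) :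
    MeetsErasure (erasureSwap (q, p)).1 (erasureSwap (q, p)).2 ∧
      erasureSwap (erasureSwap (q, p)) = (q, p) := by
  obtain ⟨j, hj, hmem, hmin, heq⟩ := exists_erasureSwap_eq h
  rw [heq]
  exact erasureSwap_splice hq hj hmem hmin

lemma length_erasureSwap (hq : q ≠ []) (h : MeetsErasure q p) :
    (erasureSwap (q, p)).1.length + (erasureSwap (q, p)).2.length = q.length + p.length := by
  obtain ⟨j, -, hmem, -, heq⟩ := exists_erasureSwap_eq h
  have hs : lastIdx p (q.getI (eraseTime q j)) < p.length := by
    have := lastIdx_le p (q.getI (eraseTime q j)); have := List.length_pos_of_mem hmem; omega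
  rw [heq]
  exact length_splice_add (eraseTime_lt_length hq j) hs

lemma pathWeight_erasureSwap [Fintype V] {m : V → V → ℕ} (hq : q ≠ [])
    (h : MeetsErasure q p) :
    pathWeight m (erasureSwap (q, p)).1 * pathWeight m (erasureSwap (q, p)).2
      = pathWeight m q * pathWeight m p := by
  obtain ⟨j, -, hmem, -, heq⟩ := exists_erasureSwap_eq h
  have hs : lastIdx p (q.getI (eraseTime q j)) < p.length := by
    have := lastIdx_le p (q.getI (eraseTime q j)); have := List.length_pos_of_mem hmem; omega
  rw [heq]
  exact pathWeight_splice_mul (eraseTime_lt_length hq j) hs (getI_lastIdx hmem).symm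

variable {A : Finset V} {x y : V}

lemma IsStoppedPath.lastIdx_cases (hq : IsStoppedPath A y q) (hp : IsStoppedPath A x p) {k : ℕ}
    (hk : k ≤ q.length - 1) (hmem : q.getI k ∈ p) :
    (k = q.length - 1 ∧ lastIdx p (q.getI k) = p.length - 1) ∨
      (k < q.length - 1 ∧ lastIdx p (q.getI k) < p.length - 1) := by
  have hb := getI_lastIdx hmem
  have hle := lastIdx_le p (q.getI k)
  have hq0 := List.length_pos_iff.mpr hq.ne_nil
  rcases hk.lt_or_eq with hlt | heq
  · refine Or.inr ⟨hlt, lt_of_le_of_ne hle fun hs => hq.getI_not_mem k (by omega) ?_⟩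
    rw [← hb, hs]; exact hp.getI_last_mem
  · refine Or.inl ⟨heq, le_antisymm hle (not_lt.mp fun hs =>
      hp.getI_not_mem (lastIdx p (q.getI k)) (by omega) ?_)⟩
    rw [hb, heq]; exact hq.getI_last_mem

lemma isStoppedPath_erasureSwap (hq : IsStoppedPath A y q) (hp : IsStoppedPath A x p)
    (h : MeetsErasure q p) :
    IsStoppedPath A y (erasureSwap (q, p)).1 ∧ IsStoppedPath A x (erasureSwap (q, p)).2 ∧
      (erasureSwap (q, p)).1.getI ((erasureSwap (q, p)).1.length - 1) = p.getI (p.length - 1) ∧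
      (erasureSwap (q, p)).2.getI ((erasureSwap (q, p)).2.length - 1) = q.getI (q.length - 1) := by
  obtain ⟨j, -, hmem, -, heq⟩ := exists_erasureSwap_eq h
  rw [heq]
  have hcases := hq.lastIdx_cases hp (eraseTime_le q j) hmem
  have hb := getI_lastIdx hmem
  generalize eraseTime q j = k at hmem hb hcases ⊢
  rcases hcases with ⟨hk, hs⟩ | ⟨hk, hs⟩
  · have hend : p.getI (p.length - 1) = q.getI (q.length - 1) := by rw [← hs, hb, hk]
    rw [hs, hk, splice_self_last hq.ne_nil hp.ne_nil, splice_self_last hp.ne_nil hq.ne_nil]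
    exact ⟨hq, hp, hend.symm, hend⟩
  · exact ⟨hq.splice hp hk hs, hp.splice hq hs hk, getI_last_splice (by omega) hs,
      getI_last_splice (by omega) hk⟩

end ErasureSwap

noncomputable def stoppedPaths [Fintype V] [Inhabited V] (A : Finset V) (z : V) (N : ℕ) :
    Finset (List V) :=
  ((range (N + 1)).biUnion (listsOfLength V)).filter (IsStoppedPath A z)

/-- The probability that the walk from `z` hits `A` within `N - 1` steps, along a path
satisfying `Q`. -/
noncomputable def stoppedWeight [Fintype V] [Inhabited V] (m : V → V → ℕ) (A : Finset V)
    (z : V) (N : ℕ) (Q : List V → Prop) : ℝ :=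
  ∑ L ∈ stoppedPaths A z N, if Q L then pathWeight m L else 0

def TraceDisconnects (m : V → V → ℕ) (A : Finset V) (y : V) (p : List V) : Prop :=
  ∀ (k : ℕ) (g : Fin (k + 1) → V), g 0 = y → g (Fin.last k) ∈ A →
    (∀ i : Fin k, 0 < m (g i.castSucc) (g i.succ)) → ∃ i, g i ∈ p

section CoreInequality

variable [Fintype V] [Inhabited V] {m : V → V → ℕ} {A : Finset V} {x y z : V}

lemma mem_stoppedPaths {N : ℕ} {L : List V} :
    L ∈ stoppedPaths A z N ↔ L.length ≤ N ∧ IsStoppedPath A z L := by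
  simp [stoppedPaths]

lemma stoppedWeight_nonneg (N : ℕ) (Q : List V → Prop) : 0 ≤ stoppedWeight m A z N Q :=
  sum_nonneg fun L _ => by split_ifs <;> simp [pathWeight_nonneg]

lemma stoppedWeight_add_not (N : ℕ) (Q : List V → Prop) :
    stoppedWeight m A z N Q + stoppedWeight m A z N (fun L => ¬ Q L)
      = stoppedWeight m A z N fun _ => True := by
  simp only [stoppedWeight, ← sum_add_distrib, if_true]
  exact sum_congr rfl fun L _ => by split_ifs <;> simp

lemma meetsErasure_of_traceDisconnects {q p : List V} (hq : IsStoppedPath A y q)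
    (hw : pathWeight m q ≠ 0) (hd : TraceDisconnects m A y p) : MeetsErasure q p := by
  have hq0 := List.length_pos_iff.mpr hq.ne_nil
  obtain ⟨i, hi⟩ := hd (eraseCount q) (fun i => q.getI (eraseTime q i))
    (by rw [Fin.val_zero, getI_eraseTime_zero, hq.getI_zero])
    (by rw [Fin.val_last, eraseTime_eraseCount]; exact hq.getI_last_mem)
    (fun i => by
      have hlt := eraseTime_lt_of_lt_eraseCount i.isLt
      rw [Fin.val_castSucc, Fin.val_succ, getI_eraseTime_succ q hlt]
      exact pos_of_pathWeight_ne_zero hw (by omega))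
  exact ⟨i, Nat.lt_succ_iff.mp i.isLt, hi⟩

/-- The length bound makes this set stable under `erasureSwap`. -/
noncomputable def meetingPairs (A : Finset V) (x y : V) (N : ℕ) : Finset (List V × List V) :=
  (stoppedPaths A y N ×ˢ stoppedPaths A x N).filter
    fun qp => MeetsErasure qp.1 qp.2 ∧ qp.1.length + qp.2.length ≤ N

lemma erasureSwap_mem_meetingPairs {N : ℕ} {qp : List V × List V}
    (h : qp ∈ meetingPairs A x y N) : erasureSwap qp ∈ meetingPairs A x y N := by
  obtain ⟨q, p⟩ := qp
  simp only [meetingPairs, mem_filter, mem_product, mem_stoppedPaths] at h ⊢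
  obtain ⟨⟨⟨-, hq⟩, -, hp⟩, hmeet, hlen⟩ := h
  obtain ⟨hq', hp', -, -⟩ := isStoppedPath_erasureSwap hq hp hmeet
  obtain ⟨hmeet', -⟩ := meetsErasure_erasureSwap hq.ne_nil hmeet
  have hlen' := length_erasureSwap hq.ne_nil hmeet
  have := List.length_pos_iff.mpr hq'.ne_nil
  have := List.length_pos_iff.mpr hp'.ne_nil
  exact ⟨⟨⟨by omega, hq'⟩, by omega, hp'⟩, hmeet', by omega⟩

/-- The swap exchanges the endpoints of the two paths and preserves the product weight. -/
lemma sum_meetingPairs_swap (S : Set V) (N : ℕ) :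
    ∑ qp ∈ meetingPairs A x y N,
        pathWeight m qp.1 * (if qp.2.getI (qp.2.length - 1) ∈ S then pathWeight m qp.2 else 0)
      = ∑ qp ∈ meetingPairs A x y N,
        (if qp.1.getI (qp.1.length - 1) ∈ S then pathWeight m qp.1 else 0)
          * pathWeight m qp.2 := by
  have hspec : ∀ qp ∈ meetingPairs A x y N, ∃ q p, qp = (q, p) ∧ IsStoppedPath A y q ∧
      IsStoppedPath A x p ∧ MeetsErasure q p := fun ⟨q, p⟩ h => by
    simp only [meetingPairs, mem_filter, mem_product, mem_stoppedPaths] at h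
    exact ⟨q, p, rfl, h.1.1.2, h.1.2.2, h.2.1⟩
  refine sum_nbij' erasureSwap erasureSwap (fun _ h => erasureSwap_mem_meetingPairs h)
    (fun _ h => erasureSwap_mem_meetingPairs h) (fun qp h => ?_) (fun qp h => ?_) (fun qp h => ?_)
  all_goals obtain ⟨q, p, rfl, hq, hp, hmeet⟩ := hspec qp h
  · exact (meetsErasure_erasureSwap hq.ne_nil hmeet).2
  · exact (meetsErasure_erasureSwap hq.ne_nil hmeet).2
  · obtain ⟨-, -, hend, -⟩ := isStoppedPath_erasureSwap hq hp hmeet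
    rw [hend, ite_mul, zero_mul, pathWeight_erasureSwap hq.ne_nil hmeet, mul_ite, mul_zero]

lemma stoppedWeight_true_mul (N N' : ℕ) (Q : List V → Prop) :
    stoppedWeight m A y N (fun _ => True) * stoppedWeight m A x N' Q
      = ∑ qp ∈ stoppedPaths A y N ×ˢ stoppedPaths A x N',
          pathWeight m qp.1 * (if Q qp.2 then pathWeight m qp.2 else 0) := by
  rw [sum_product, stoppedWeight, stoppedWeight, sum_mul_sum]
  simp

lemma sum_meetsErasure_le (S : Set V) (N : ℕ)
    (hx : stoppedWeight m A x (2 * N) (fun _ => True) ≤ 1) :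
    ∑ qp ∈ (stoppedPaths A y N ×ˢ stoppedPaths A x N).filter
        (fun qp => MeetsErasure qp.1 qp.2),
        pathWeight m qp.1 * (if qp.2.getI (qp.2.length - 1) ∈ S then pathWeight m qp.2 else 0)
      ≤ stoppedWeight m A y (2 * N) fun L => L.getI (L.length - 1) ∈ S := by
  have hnonneg : ∀ (q p : List V) (P₁ P₂ : Prop) [Decidable P₁] [Decidable P₂],
      0 ≤ (if P₁ then pathWeight m q else 0) * (if P₂ then pathWeight m p else 0) :=
    fun q p _ _ _ _ => mul_nonneg (by split_ifs <;> simp [pathWeight_nonneg])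
      (by split_ifs <;> simp [pathWeight_nonneg])
  calc _ ≤ ∑ qp ∈ meetingPairs A x y (2 * N),
        pathWeight m qp.1
          * (if qp.2.getI (qp.2.length - 1) ∈ S then pathWeight m qp.2 else 0) := by
        refine sum_le_sum_of_subset_of_nonneg (fun ⟨q, p⟩ h => ?_) fun qp _ _ => by
          simpa using hnonneg qp.1 qp.2 True (qp.2.getI (qp.2.length - 1) ∈ S)
        simp only [meetingPairs, mem_filter, mem_product, mem_stoppedPaths] at h ⊢
        exact ⟨⟨⟨by omega, h.1.1.2⟩, by omega, h.1.2.2⟩, h.2, by omega⟩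
    _ = ∑ qp ∈ meetingPairs A x y (2 * N),
        (if qp.1.getI (qp.1.length - 1) ∈ S then pathWeight m qp.1 else 0) * pathWeight m qp.2 :=
        sum_meetingPairs_swap S _
    _ ≤ ∑ qp ∈ stoppedPaths A y (2 * N) ×ˢ stoppedPaths A x (2 * N),
        (if qp.1.getI (qp.1.length - 1) ∈ S then pathWeight m qp.1 else 0)
          * pathWeight m qp.2 :=
        sum_le_sum_of_subset_of_nonneg (filter_subset _ _) fun qp _ _ => by
          simpa using hnonneg qp.1 qp.2 (qp.1.getI (qp.1.length - 1) ∈ S) True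
    _ = stoppedWeight m A y (2 * N) (fun L => L.getI (L.length - 1) ∈ S)
          * stoppedWeight m A x (2 * N) (fun _ => True) := by
        rw [sum_product, stoppedWeight, stoppedWeight, sum_mul_sum]
        simp
    _ ≤ _ := mul_le_of_le_one_right (stoppedWeight_nonneg _ _) hx

lemma sum_not_meetsErasure_le (S : Set V) (N : ℕ) :
    ∑ qp ∈ (stoppedPaths A y N ×ˢ stoppedPaths A x N).filter
        (fun qp => ¬ MeetsErasure qp.1 qp.2),
        pathWeight m qp.1 * (if qp.2.getI (qp.2.length - 1) ∈ S then pathWeight m qp.2 else 0)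
      ≤ stoppedWeight m A y N (fun _ => True)
          * stoppedWeight m A x N (fun L => ¬ TraceDisconnects m A y L) := by
  rw [stoppedWeight_true_mul]
  refine (sum_le_sum fun ⟨q, p⟩ h => ?_).trans
    (sum_le_sum_of_subset_of_nonneg (filter_subset _ _) fun qp _ _ =>
      mul_nonneg (pathWeight_nonneg _) (by split_ifs <;> simp [pathWeight_nonneg]))
  simp only [mem_filter, mem_product, mem_stoppedPaths] at h
  by_cases hd : TraceDisconnects m A y p
  · have hw : pathWeight m q = 0 := by_contra fun hw =>
      h.2 (meetsErasure_of_traceDisconnects h.1.1.2 hw hd)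
    simp [hw]
  · simp only [hd, not_false_eq_true, if_true]
    exact mul_le_mul_of_nonneg_left (by split_ifs <;> simp [pathWeight_nonneg])
      (pathWeight_nonneg q)

/-- The combinatorial core: a weighted form of `P_x(S) - P_x(no disconnection) ≤ P_y(S)`. -/
theorem stoppedWeight_mul_sub_le (S : Set V) (N : ℕ)
    (hx : stoppedWeight m A x (2 * N) (fun _ => True) ≤ 1) :
    stoppedWeight m A y N (fun _ => True) *
        (stoppedWeight m A x N (fun L => L.getI (L.length - 1) ∈ S)
          - stoppedWeight m A x N (fun L => ¬ TraceDisconnects m A y L))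
      ≤ stoppedWeight m A y (2 * N) fun L => L.getI (L.length - 1) ∈ S := by
  rw [mul_sub, stoppedWeight_true_mul, ← sum_filter_add_sum_filter_not _
    (fun qp : List V × List V => MeetsErasure qp.1 qp.2)]
  linarith [sum_meetsErasure_le (m := m) (A := A) (x := x) (y := y) S N hx,
    sum_not_meetsErasure_le (m := m) (A := A) (x := x) (y := y) S N]

end CoreInequality

section StoppedPrefix

variable [Inhabited V] {A : Finset V}

lemma IsStoppedPath.eq_of_prefix {L₁ L₂ M : List V} {z₁ z₂ : V}
    (h₁ : IsStoppedPath A z₁ L₁) (h₂ : IsStoppedPath A z₂ L₂) (hp₁ : L₁ <+: M)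
    (hp₂ : L₂ <+: M) : L₁ = L₂ := by
  wlog hle : L₁.length ≤ L₂.length generalizing L₁ L₂ z₁ z₂
  · exact (this h₂ h₁ hp₂ hp₁ (le_of_not_ge hle)).symm
  have hpre := List.prefix_of_prefix_length_le hp₁ hp₂ hle
  have := List.length_pos_iff.mpr h₁.ne_nil
  refine hpre.eq_of_length (le_antisymm hle (not_lt.mp fun hlt => ?_))
  refine h₂.getI_not_mem (L₁.length - 1) (by omega) ?_
  rw [getI_of_prefix hpre (by omega)]
  exact h₁.getI_last_mem

lemma IsStoppedPath.eq_cons_tail {z : V} {L : List V} (h : IsStoppedPath A z L) :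
    L = z :: L.tail := by
  obtain ⟨hne, h0, -, -⟩ := h
  cases L with
  | nil => exact absurd rfl hne
  | cons a l => rw [← h0]; rfl

variable [Fintype V] {m : V → V → ℕ}

/-- Walks of length `T + 1` from `z` are grouped according to their stopped prefix. -/
lemma sum_stoppedPrefix (hm : ∀ a, ∃ b, 0 < m a b) (z : V) (T : ℕ) (Q : List V → Prop) :
    ∑ K ∈ listsOfLength V T,
        (if ∃ L, L <+: z :: K ∧ IsStoppedPath A z L ∧ Q L then pathWeight m (z :: K) else 0)
      = stoppedWeight m A z (T + 1) Q := by
  have hone : ∀ K ∈ listsOfLength V T,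
      (if ∃ L, L <+: z :: K ∧ IsStoppedPath A z L ∧ Q L then pathWeight m (z :: K) else 0)
        = ∑ L ∈ stoppedPaths A z (T + 1),
            if Q L ∧ L <+: z :: K then pathWeight m (z :: K) else 0 := by
    intro K hK
    split_ifs with h
    · obtain ⟨L, hLK, hL, hQ⟩ := h
      have hlen : L.length ≤ T + 1 := by
        simpa [mem_listsOfLength.mp hK] using hLK.length_le
      rw [sum_eq_single_of_mem L (mem_stoppedPaths.mpr ⟨hlen, hL⟩) fun L' hL' hne => ?_]
      · rw [if_pos ⟨hQ, hLK⟩]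
      · exact if_neg fun h' => hne ((mem_stoppedPaths.mp hL').2.eq_of_prefix hL h'.2 hLK)
    · exact (sum_eq_zero fun L hL => if_neg fun h' =>
        h ⟨L, h'.2, (mem_stoppedPaths.mp hL).2, h'.1⟩).symm
  rw [sum_congr rfl hone, sum_comm, stoppedWeight]
  refine sum_congr rfl fun L hL => ?_
  obtain ⟨hlen, hstop⟩ := mem_stoppedPaths.mp hL
  obtain ⟨l, rfl⟩ : ∃ l, L = z :: l := ⟨_, hstop.eq_cons_tail⟩
  by_cases hQ : Q (z :: l)
  · simp only [hQ, true_and, List.cons_prefix_cons, if_true]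
    exact sum_pathWeight_of_prefix hm z (by simpa using hlen)
  · simp [hQ]

lemma stoppedWeight_le_one (hm : ∀ a, ∃ b, 0 < m a b) (z : V) (N : ℕ) (Q : List V → Prop) :
    stoppedWeight m A z N Q ≤ 1 := by
  cases N with
  | zero =>
    refine (sum_eq_zero fun L hL => ?_).trans_le zero_le_one
    obtain ⟨hlen, hstop⟩ := mem_stoppedPaths.mp hL
    exact absurd (List.length_eq_zero_iff.mp (Nat.le_zero.mp hlen)) hstop.ne_nil
  | succ T =>
    rw [← sum_stoppedPrefix hm z T Q, ← sum_pathWeight_cons hm z T]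
    exact sum_le_sum fun K _ => by split_ifs <;> simp [pathWeight_nonneg]

lemma stoppedWeight_congr {z : V} {N : ℕ} {Q Q' : List V → Prop} (h : ∀ L, Q L ↔ Q' L) :
    stoppedWeight m A z N Q = stoppedWeight m A z N Q' := by
  obtain rfl : Q = Q' := funext fun L => propext (h L)
  rfl

end StoppedPrefix

section HittingTime

variable [Inhabited V] {A : Finset V} {f : ℕ → V}

lemma map_range_sInf_eq_of_prefix {N : ℕ} {z : V} {L : List V}
    (hpre : L <+: (List.range N).map f) (hL : IsStoppedPath A z L) :
    (List.range (sInf {n | f n ∈ A} + 1)).map f = L := by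
  have hL0 := List.length_pos_iff.mpr hL.ne_nil
  have hLN : L.length ≤ N := by simpa using hpre.length_le
  have hf : ∀ i < L.length, f i = L.getI i := fun i hi => by
    rw [← getI_of_prefix hpre hi, getI_map_range (by omega)]
  have hmem : L.length - 1 ∈ {n | f n ∈ A} := by
    rw [Set.mem_ofPred_eq, hf _ (by omega)]; exact hL.getI_last_mem
  have hsInf : sInf {n | f n ∈ A} = L.length - 1 :=
    le_antisymm (Nat.sInf_le hmem) (le_csInf ⟨_, hmem⟩ fun i hi => not_lt.mp fun hlt =>
      hL.getI_not_mem i (by omega) (by rw [← hf i (by omega)]; exact hi))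
  rw [hsInf, Nat.sub_add_cancel hL0]
  conv_rhs => rw [List.prefix_iff_eq_take.mp hpre, ← List.map_take, List.take_range,
    Nat.min_eq_left hLN]

lemma isStoppedPath_map_range_sInf {n : ℕ} (hn : f n ∈ A) :
    IsStoppedPath A (f 0) ((List.range (sInf {n | f n ∈ A} + 1)).map f) where
  ne_nil := by simp
  getI_zero := getI_map_range (Nat.succ_pos _)
  getI_not_mem i hi := by
    rw [List.length_map, List.length_range] at hi
    rw [getI_map_range (by omega)]
    exact Nat.notMem_of_lt_sInf (s := {n | f n ∈ A}) (by omega)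
  getI_last_mem := by
    rw [getI_last_map_range f]
    exact Nat.sInf_mem (s := {n | f n ∈ A}) ⟨n, hn⟩

end HittingTime

/-- The simple random walk on `m` from `z`, given by its cylinder probabilities. -/
def IsRandomWalkFrom [Fintype V] {Ω : Type*} [MeasurableSpace Ω] (P : Measure Ω)
    (m : V → V → ℕ) (z : V) (Y : Ω → ℕ → V) : Prop :=
  ∀ (n : ℕ) (path : Fin (n + 1) → V), (P {ω | ∀ i : Fin (n + 1), Y ω i = path i}).toReal
    = if path 0 = z then pathWeight m (List.ofFn path) else 0

namespace IsRandomWalkFrom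

variable [Fintype V] [Inhabited V] {Ω : Type*} [MeasurableSpace Ω] {P : Measure Ω}
  {m : V → V → ℕ} {z : V} {Y : Ω → ℕ → V}

lemma measure_trajectory_eq (hY : IsRandomWalkFrom P m z Y) (v : V) {K : List V} :
    (P {ω | (List.range (K.length + 1)).map (Y ω) = v :: K}).toReal
      = if v = z then pathWeight m (v :: K) else 0 := by
  have hofFn : List.ofFn (fun i : Fin (K.length + 1) => (v :: K).getI i) = v :: K :=
    List.ext_getElem (by simp) fun i h₁ h₂ => by rw [List.getElem_ofFn, List.getI_eq_getElem]
  have hset : {ω | (List.range (K.length + 1)).map (Y ω) = v :: K}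
      = {ω | ∀ i : Fin (K.length + 1), Y ω i = (v :: K).getI i} := by
    ext ω
    simp only [Set.mem_ofPred_eq, List.ext_getElem_iff, List.length_map, List.length_range,
      List.length_cons, List.getElem_map, List.getElem_range, true_and]
    exact ⟨fun h i => by rw [h i i.isLt i.isLt, List.getI_eq_getElem], fun h i hi _ => by
      rw [h ⟨i, hi⟩, List.getI_eq_getElem]⟩
  rw [hset, hY, hofFn, Fin.val_zero, List.getI_cons_zero]

variable [IsProbabilityMeasure P]

lemma measure_le_sum (hY : IsRandomWalkFrom P m z Y) (T : ℕ) (R : List V → Prop)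
    [DecidablePred R] {Z : Set Ω}
    (hZ : ∀ ω ∈ Z, R ((List.range (T + 1)).map (Y ω))) :
    (P Z).toReal
      ≤ ∑ K ∈ listsOfLength V T, if R (z :: K) then pathWeight m (z :: K) else 0 := by
  set G := (listsOfLength V (T + 1)).filter R
  have hcover : Z ⊆ ⋃ M ∈ G, {ω | (List.range (T + 1)).map (Y ω) = M} := fun ω hω =>
    Set.mem_biUnion (mem_filter.mpr ⟨by simp, hZ ω hω⟩) rfl
  have hle : P Z ≤ ∑ M ∈ G, P {ω | (List.range (T + 1)).map (Y ω) = M} :=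
    (measure_mono hcover).trans (measure_biUnion_finset_le G _)
  refine (ENNReal.toReal_mono (ENNReal.sum_ne_top.mpr fun _ _ => measure_ne_top P _) hle).trans
    (le_of_eq ?_)
  rw [ENNReal.toReal_sum fun _ _ => measure_ne_top P _, sum_filter, sum_listsOfLength_succ,
    sum_eq_single z (fun v _ hv => sum_eq_zero fun K hK => ?_) (by simp)]
  · refine sum_congr rfl fun K hK => ?_
    rw [← mem_listsOfLength.mp hK, measure_trajectory_eq hY z, if_pos rfl]
  · rw [← mem_listsOfLength.mp hK, measure_trajectory_eq hY v, if_neg hv, ite_self]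

/-- `Y` need not be measurable: this follows from `measure_le_sum` for `Zᶜ` by subadditivity
of the outer measure. -/
lemma sum_le_measure (hY : IsRandomWalkFrom P m z Y) (hm : ∀ a, ∃ b, 0 < m a b) (T : ℕ)
    (R : List V → Prop) [DecidablePred R] {Z : Set Ω}
    (hZ : ∀ ω, R ((List.range (T + 1)).map (Y ω)) → ω ∈ Z) :
    ∑ K ∈ listsOfLength V T, (if R (z :: K) then pathWeight m (z :: K) else 0)
      ≤ (P Z).toReal := by
  have hcompl := hY.measure_le_sum T (fun M => ¬ R M) (Z := Zᶜ) fun ω hω hR => hω (hZ ω hR)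
  have hunion : 1 ≤ (P Z).toReal + (P Zᶜ).toReal := by
    rw [← ENNReal.toReal_add (measure_ne_top P _) (measure_ne_top P _)]
    refine ENNReal.toReal_one ▸ ENNReal.toReal_mono (by simp [measure_ne_top]) ?_
    simpa [Set.union_compl_self] using measure_union_le (μ := P) Z Zᶜ
  have htotal : ∑ K ∈ listsOfLength V T, (if R (z :: K) then pathWeight m (z :: K) else 0)
      + ∑ K ∈ listsOfLength V T, (if ¬ R (z :: K) then pathWeight m (z :: K) else 0) = 1 := by
    rw [← sum_add_distrib, ← sum_pathWeight_cons hm z T]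
    exact sum_congr rfl fun K _ => by split_ifs <;> simp
  linarith

variable {A : Finset V}

lemma stoppedWeight_le_measure (hY : IsRandomWalkFrom P m z Y) (hm : ∀ a, ∃ b, 0 < m a b)
    (T : ℕ) (Q : List V → Prop) :
    stoppedWeight m A z (T + 1) Q
      ≤ (P {ω | Q ((List.range (sInf {n | Y ω n ∈ A} + 1)).map (Y ω))}).toReal := by
  rw [← sum_stoppedPrefix hm z T Q]
  refine hY.sum_le_measure hm T (fun M => ∃ L, L <+: M ∧ IsStoppedPath A z L ∧ Q L) ?_
  rintro ω ⟨L, hpre, hL, hQ⟩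
  change Q _
  rwa [map_range_sInf_eq_of_prefix hpre hL]

lemma measure_le_stoppedWeight_add (hY : IsRandomWalkFrom P m z Y) (hm : ∀ a, ∃ b, 0 < m a b)
    (T : ℕ) (Q : List V → Prop) :
    (P {ω | Q ((List.range (sInf {n | Y ω n ∈ A} + 1)).map (Y ω))}).toReal
      ≤ stoppedWeight m A z (T + 1) Q + avoidWeight m A z T := by
  refine (hY.measure_le_sum T
    (fun M => (∃ L, L <+: M ∧ IsStoppedPath A (M.getI 0) L ∧ Q L) ∨ ∀ u ∈ M, u ∉ A)
    fun ω hω => ?_).trans ?_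
  · by_cases hhit : ∃ n ≤ T, Y ω n ∈ A
    · obtain ⟨n, hn, hnA⟩ := hhit
      refine Or.inl
        ⟨_, map_range_prefix (Nat.succ_le_succ ((Nat.sInf_le hnA).trans hn)), ?_, hω⟩
      rw [getI_map_range (Nat.succ_pos T)]
      exact isStoppedPath_map_range_sInf hnA
    · refine Or.inr fun u hu huA => hhit ?_
      obtain ⟨i, hi, rfl⟩ := List.mem_map.mp hu
      exact ⟨i, Nat.lt_succ_iff.mp (List.mem_range.mp hi), huA⟩
  · rw [← sum_stoppedPrefix hm z T Q, avoidWeight, ← sum_add_distrib]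
    refine sum_le_sum fun K _ => ?_
    rw [List.getI_cons_zero]
    split_ifs <;> simp_all [pathWeight_nonneg]

theorem tendsto_stoppedWeight (hY : IsRandomWalkFrom P m z Y) (hm : ∀ a, ∃ b, 0 < m a b)
    (havoid : Tendsto (avoidWeight m A z) atTop (𝓝 0)) (Q : List V → Prop) :
    Tendsto (fun N => stoppedWeight m A z N Q) atTop
      (𝓝 (P {ω | Q ((List.range (sInf {n | Y ω n ∈ A} + 1)).map (Y ω))}).toReal) := by
  set p := (P {ω | Q ((List.range (sInf {n | Y ω n ∈ A} + 1)).map (Y ω))}).toReal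
  refine (tendsto_add_atTop_iff_nat 1).mp (tendsto_of_tendsto_of_tendsto_of_le_of_le
    (g := fun T => p - avoidWeight m A z T) ?_ tendsto_const_nhds (fun T => ?_)
    (hY.stoppedWeight_le_measure hm · Q))
  · simpa using tendsto_const_nhds (x := p) |>.sub havoid
  · linarith [hY.measure_le_stoppedWeight_add (A := A) hm T Q]

lemma tendsto_stoppedWeight_mem (hY : IsRandomWalkFrom P m z Y) (hm : ∀ a, ∃ b, 0 < m a b)
    (havoid : Tendsto (avoidWeight m A z) atTop (𝓝 0)) (S : Set V) :
    Tendsto (fun N => stoppedWeight m A z N fun L => L.getI (L.length - 1) ∈ S) atTop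
      (𝓝 (P {ω | Y ω (sInf {n | Y ω n ∈ A}) ∈ S}).toReal) := by
  have hset : {ω | Y ω (sInf {n | Y ω n ∈ A}) ∈ S}
      = {ω | (fun L : List V => L.getI (L.length - 1) ∈ S)
          ((List.range (sInf {n | Y ω n ∈ A} + 1)).map (Y ω))} := by
    ext ω
    simp only [Set.mem_ofPred_eq, getI_last_map_range]
  rw [hset]
  exact hY.tendsto_stoppedWeight hm havoid _

lemma tendsto_stoppedWeight_true (hY : IsRandomWalkFrom P m z Y) (hm : ∀ a, ∃ b, 0 < m a b)
    (havoid : Tendsto (avoidWeight m A z) atTop (𝓝 0)) :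
    Tendsto (fun N => stoppedWeight m A z N fun _ => True) atTop (𝓝 1) := by
  simpa using hY.tendsto_stoppedWeight hm havoid fun _ => True

/-- Without measurability of the walk this is not automatic; it comes from the limits. -/
lemma measure_hit_compl (hY : IsRandomWalkFrom P m z Y) (hm : ∀ a, ∃ b, 0 < m a b)
    (havoid : Tendsto (avoidWeight m A z) atTop (𝓝 0)) (S : Set V) :
    (P {ω | Y ω (sInf {n | Y ω n ∈ A}) ∈ Sᶜ}).toReal
      = 1 - (P {ω | Y ω (sInf {n | Y ω n ∈ A}) ∈ S}).toReal := by
  refine tendsto_nhds_unique (hY.tendsto_stoppedWeight_mem hm havoid Sᶜ) ?_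
  refine ((hY.tendsto_stoppedWeight_true hm havoid).sub
    (hY.tendsto_stoppedWeight_mem hm havoid S)).congr fun N => ?_
  rw [← stoppedWeight_add_not _ fun L => L.getI (L.length - 1) ∈ S,
    stoppedWeight_congr (Q := fun L => L.getI (L.length - 1) ∈ Sᶜ)
      fun L => Set.mem_compl_iff _ _]
  ring

theorem measure_hit_sub_le {x y : V} {Y' : Ω → ℕ → V} (hx : IsRandomWalkFrom P m x Y)
    (hy : IsRandomWalkFrom P m y Y') (hm : ∀ a, ∃ b, 0 < m a b)
    (havoid : ∀ v, Tendsto (avoidWeight m A v) atTop (𝓝 0)) (S : Set V) :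
    (P {ω | Y ω (sInf {n | Y ω n ∈ A}) ∈ S}).toReal
        - (P {ω | Y' ω (sInf {n | Y' ω n ∈ A}) ∈ S}).toReal
      ≤ 1 - (P {ω | TraceDisconnects m A y
          ((List.range (sInf {n | Y ω n ∈ A} + 1)).map (Y ω))}).toReal := by
  have hnotDisc := ((hx.tendsto_stoppedWeight_true hm (havoid x)).sub
    (hx.tendsto_stoppedWeight hm (havoid x) (TraceDisconnects m A y))).congr fun N =>
      (eq_sub_of_add_eq' (stoppedWeight_add_not N (TraceDisconnects m A y))).symm
  have hyS := (hy.tendsto_stoppedWeight_mem hm (havoid y) S).comp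
    (tendsto_id.const_mul_atTop' (by norm_num : 0 < 2))
  have key := le_of_tendsto_of_tendsto'
    ((hy.tendsto_stoppedWeight_true hm (havoid y)).mul
      ((hx.tendsto_stoppedWeight_mem hm (havoid x) S).sub hnotDisc)) hyS
    fun N => stoppedWeight_mul_sub_le S N (stoppedWeight_le_one hm x _ _)
  linarith

end IsRandomWalkFrom

end RandomWalk

open RandomWalk in
theorem tv_bound_via_disconnection_general
    {V : Type*} [Fintype V] [DecidableEq V]
    {Ω : Type*} [MeasurableSpace Ω] (P : Measure Ω) [IsProbabilityMeasure P]
    (m : V → V → ℕ)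
    (hconn : ∀ x y : V, Relation.ReflTransGen (fun a b => 0 < m a b) x y)
    (A : Finset V) (hA : A.Nonempty)
    (X : V → Ω → ℕ → V)
    (hX : ∀ (x : V) (n : ℕ) (path : Fin (n + 1) → V),
      (P {ω | ∀ i : Fin (n + 1), X x ω i.1 = path i}).toReal
        = (if path 0 = x then 1 else 0)
          * ∏ i : Fin n, (m (path i.castSucc) (path i.succ) : ℝ)
              / ∑ z, (m (path i.castSucc) z : ℝ))
    (x y : V) (hx : x ∉ A) :
    (⨆ S : Set V,
        |(P {ω | X x ω (sInf {n | X x ω n ∈ A}) ∈ S}).toReal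
          - (P {ω | X y ω (sInf {n | X y ω n ∈ A}) ∈ S}).toReal|)
      ≤ 1 - (P {ω | ∀ (k : ℕ) (q : Fin (k + 1) → V), q 0 = y → q (Fin.last k) ∈ A →
            (∀ i : Fin k, 0 < m (q i.castSucc) (q i.succ)) →
            ∃ i : Fin (k + 1), ∃ j : ℕ,
              j ≤ sInf {n | X x ω n ∈ A} ∧ X x ω j = q i}).toReal := by
  obtain ⟨a, ha⟩ := hA
  have : Inhabited V := ⟨a⟩
  have hm := exists_pos_of_connected hconn (a := x) (b := a) fun h => hx (h ▸ ha)
  have havoid := tendsto_avoidWeight (A := A) hm fun v => ⟨a, ha, hconn v a⟩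
  have hwalk : ∀ z, IsRandomWalkFrom P m z (X z) := fun z n path => by
    rw [hX, pathWeight_ofFn]
    split_ifs <;> simp [transProb]
  have hdisc : {ω | ∀ (k : ℕ) (q : Fin (k + 1) → V), q 0 = y → q (Fin.last k) ∈ A →
      (∀ i : Fin k, 0 < m (q i.castSucc) (q i.succ)) →
      ∃ i : Fin (k + 1), ∃ j : ℕ, j ≤ sInf {n | X x ω n ∈ A} ∧ X x ω j = q i}
      = {ω | TraceDisconnects m A y
          ((List.range (sInf {n | X x ω n ∈ A} + 1)).map (X x ω))} := by
    ext ω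
    simp [TraceDisconnects]
  rw [hdisc]
  refine Real.iSup_le (fun S => abs_sub_le_iff.mpr
    ⟨(hwalk x).measure_hit_sub_le (hwalk y) hm havoid S, ?_⟩)
    (sub_nonneg.mpr measureReal_le_one)
  have hcompl := (hwalk x).measure_hit_sub_le (hwalk y) hm havoid Sᶜ
  rw [(hwalk x).measure_hit_compl hm (havoid x), (hwalk y).measure_hit_compl hm (havoid y)]
    at hcompl
  linarith

/-- **Total variation bound via disconnection (Wilson's algorithm lemma).**
Let `G` be a finite connected multigraph on `V` with symmetric multiplicities `m` and let
`A` be a nonempty vertex set.  For each `x`, let `X x` be the simple random walk started at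
`x` (characterized by its cylinder probabilities), and let `τ^x = inf{n : X^x_n ∈ A}`.
Then for `x, y ∉ A`, the total variation distance between the hitting distributions
satisfies `d_TV(X^x_{τ^x}, X^y_{τ^y}) ≤ 1 - P[trace of X^x up to τ^x disconnects y from A]`,
where a set `S` disconnects `y` from `A` if every path in `G` from `y` to `A` meets `S`. -/
theorem tv_bound_via_disconnection
    {V : Type*} [Fintype V] [DecidableEq V]
    {Ω : Type*} [MeasurableSpace Ω] (P : Measure Ω) [IsProbabilityMeasure P]
    (m : V → V → ℕ) (hsymm : ∀ x y, m x y = m y x)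
    (hconn : ∀ x y : V, Relation.ReflTransGen (fun a b => 0 < m a b) x y)
    (A : Finset V) (hA : A.Nonempty)
    (X : V → Ω → ℕ → V)
    (hX : ∀ (x : V) (n : ℕ) (path : Fin (n + 1) → V),
      (P {ω | ∀ i : Fin (n + 1), X x ω i.1 = path i}).toReal
        = (if path 0 = x then 1 else 0)
          * ∏ i : Fin n, (m (path i.castSucc) (path i.succ) : ℝ)
              / ∑ z, (m (path i.castSucc) z : ℝ))
    (x y : V) (hx : x ∉ A) (hy : y ∉ A) :
    (⨆ S : Set V,
        |(P {ω | X x ω (sInf {n | X x ω n ∈ A}) ∈ S}).toReal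
          - (P {ω | X y ω (sInf {n | X y ω n ∈ A}) ∈ S}).toReal|)
      ≤ 1 - (P {ω | ∀ (k : ℕ) (q : Fin (k + 1) → V), q 0 = y → q (Fin.last k) ∈ A →
            (∀ i : Fin k, 0 < m (q i.castSucc) (q i.succ)) →
            ∃ i : Fin (k + 1), ∃ j : ℕ,
              j ≤ sInf {n | X x ω n ∈ A} ∧ X x ω j = q i}).toReal :=
  tv_bound_via_disconnection_general P m hconn A hA X hX x y hx
end

section
/- Let U ⊆ ℝ² be open, let h : U → ℝ be harmonic on U, and let φ be a smooth function compactly supported in U. Then ∫_U |∇(h φ)(z)|² dz = ∫_U h(z)² |∇φ(z)|² dz. Equivalently, ∫_U |∇(hφ)|² = ∫_U ( (1/2) Δ(φ²) - φ Δφ ) h², since (1/2)Δ(φ²) - φΔφ = |∇φ|². -/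
open MeasureTheory

/-- The Laplacian of a function on `ℝ² = EuclideanSpace ℝ (Fin 2)`, as the sum of the
second derivatives in the two coordinate directions. -/
noncomputable def lap2 (f : EuclideanSpace ℝ (Fin 2) → ℝ) (z : EuclideanSpace ℝ (Fin 2)) : ℝ :=
  ∑ i : Fin 2,
    fderiv ℝ (fun w => fderiv ℝ f w (EuclideanSpace.single i 1)) z (EuclideanSpace.single i 1)

namespace DirichletAux

open Set Function
open scoped Manifold

noncomputable abbrev E2 := EuclideanSpace ℝ (Fin 2)
noncomputable abbrev ee (i : Fin 2) : E2 := EuclideanSpace.single i 1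

lemma grad_apply (f : E2 → ℝ) (z : E2) (i : Fin 2) :
    gradient f z i = fderiv ℝ f z (ee i) := by
  have h1 : inner ℝ (gradient f z) (EuclideanSpace.single i (1:ℝ)) =
      fderiv ℝ f z (EuclideanSpace.single i 1) := by
    rw [gradient]; exact InnerProductSpace.toDual_symm_apply
  rw [ee, ← h1, EuclideanSpace.inner_single_right]; simp

lemma norm_grad_sq (f : E2 → ℝ) (z : E2) :
    ‖gradient f z‖ ^ 2 = ∑ i : Fin 2, (fderiv ℝ f z (ee i)) ^ 2 := by
  have h2 : ‖gradient f z‖ ^ 2 = inner ℝ (gradient f z) (gradient f z) :=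
    (real_inner_self_eq_norm_sq _).symm
  rw [h2, PiLp.inner_apply]
  refine Finset.sum_congr rfl fun i _ => ?_
  rw [grad_apply]; simp [sq]

lemma fderiv_zero_on {f : E2 → ℝ} {S : Set E2} (hS : IsOpen S) (hf : ∀ x ∈ S, f x = 0)
    {z : E2} (hz : z ∈ S) : fderiv ℝ f z = 0 := by
  have h : f =ᶠ[nhds z] (fun _ => (0:ℝ)) := Filter.eventuallyEq_of_mem (hS.mem_nhds hz) hf
  rw [h.fderiv_eq]
  exact fderiv_const_apply 0

lemma grad_zero {f : E2 → ℝ} {z : E2} (h : fderiv ℝ f z = 0) : gradient f z = 0 := by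
  rw [gradient, h, map_zero]

lemma fderiv_sq' (φ : E2 → ℝ) {z : E2} (hdφ : DifferentiableAt ℝ φ z) (v : E2) :
    fderiv ℝ (fun w => φ w ^ 2) z v = 2 * φ z * fderiv ℝ φ z v := by
  have h : (fun w => φ w ^ 2) = fun w => φ w * φ w := by ext w; ring
  rw [h, fderiv_fun_mul hdφ hdφ]
  simp only [ContinuousLinearMap.add_apply, ContinuousLinearMap.smul_apply, smul_eq_mul]
  ring

/-- The pointwise identity `½ Δ(φ²) - φ Δφ = |∇φ|²` for a `C²` function. -/
lemma lap_identity (φ : E2 → ℝ) (hφ : ContDiff ℝ 2 φ) (z : E2) :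
    1 / 2 * lap2 (fun w => φ w ^ 2) z - φ z * lap2 φ z = ‖gradient φ z‖ ^ 2 := by
  have h12 : (1 : WithTop ℕ∞) + 1 ≤ 2 := by norm_num
  have hφ1 : ContDiff ℝ 1 φ := hφ.of_le one_le_two
  have hB : ∀ i : Fin 2, ContDiff ℝ 1 (fun w => fderiv ℝ φ w (ee i)) := fun i =>
    (hφ.fderiv_right h12).clm_apply contDiff_const
  have key : ∀ i : Fin 2,
      fderiv ℝ (fun w => fderiv ℝ (fun w' => φ w' ^ 2) w (ee i)) z (ee i)
        = 2 * fderiv ℝ φ z (ee i) ^ 2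
          + 2 * φ z * fderiv ℝ (fun w => fderiv ℝ φ w (ee i)) z (ee i) := by
    intro i
    have hfun : (fun w => fderiv ℝ (fun w' => φ w' ^ 2) w (ee i))
        = fun w => 2 * (φ w * fderiv ℝ φ w (ee i)) := by
      ext w
      rw [fderiv_sq' φ (hφ1.differentiable one_ne_zero w)]
      ring
    rw [hfun]
    have hd : DifferentiableAt ℝ (fun w => φ w * fderiv ℝ φ w (ee i)) z :=
      ((hφ1.differentiable one_ne_zero z).mul ((hB i).differentiable one_ne_zero z))
    rw [fderiv_const_mul hd 2,
      fderiv_fun_mul (hφ1.differentiable one_ne_zero z) ((hB i).differentiable one_ne_zero z)]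
    simp only [ContinuousLinearMap.coe_smul', Pi.smul_apply, ContinuousLinearMap.add_apply,
      ContinuousLinearMap.smul_apply, smul_eq_mul]
    ring
  rw [norm_grad_sq]
  simp only [lap2]
  have e1 : ∀ i : Fin 2,
      fderiv ℝ (fun w => fderiv ℝ (fun w' => φ w' ^ 2) w (EuclideanSpace.single i 1)) z
        (EuclideanSpace.single i 1)
      = 2 * fderiv ℝ φ z (ee i) ^ 2
          + 2 * φ z * fderiv ℝ (fun w => fderiv ℝ φ w (ee i)) z (ee i) := key
  rw [Finset.sum_congr rfl fun i _ => e1 i]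
  simp only [Fin.sum_univ_two]
  ring

lemma ibp_i (H φ : E2 → ℝ) (hH : ContDiff ℝ 2 H) (hφ : ContDiff ℝ 2 φ)
    (hφc : HasCompactSupport φ) (i : Fin 2) :
    ∫ z : E2, (φ z ^ 2 * fderiv ℝ H z (ee i) ^ 2
        + (H z * fderiv ℝ H z (ee i)) * fderiv ℝ (fun w => φ w ^ 2) z (ee i))
      = - ∫ z : E2, (H z * fderiv ℝ (fun w => fderiv ℝ H w (ee i)) z (ee i)) * φ z ^ 2 := by
  have h12 : (1 : WithTop ℕ∞) + 1 ≤ 2 := by norm_num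
  have h01 : (0 : WithTop ℕ∞) + 1 ≤ 1 := by norm_num
  have hH1 : ContDiff ℝ 1 H := hH.of_le one_le_two
  set A : E2 → ℝ := fun w => fderiv ℝ H w (ee i) with hA_def
  set C : E2 → ℝ := fun w => fderiv ℝ A w (ee i) with hC_def
  have hA : ContDiff ℝ 1 A := (hH.fderiv_right h12).clm_apply contDiff_const
  have cC : Continuous C := ((hA.fderiv_right h01).continuous).clm_apply continuous_const
  have hf : ContDiff ℝ 1 (fun z => H z * A z) := hH1.mul hA
  have hφ2 : ContDiff ℝ 2 (fun z => φ z ^ 2) := hφ.pow 2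
  have hφ2c : HasCompactSupport (fun z => φ z ^ 2) := by
    have : HasCompactSupport (φ * φ) := hφc.mul_right
    simpa [sq, Pi.mul_def] using this
  have cA : Continuous A := hA.continuous
  have cDφ2 : Continuous (fun z => fderiv ℝ (fun w => φ w ^ 2) z (ee i)) :=
    ((hφ2.fderiv_right h12).continuous).clm_apply continuous_const
  have cDf : Continuous (fun z => fderiv ℝ (fun z => H z * A z) z (ee i)) :=
    ((hf.fderiv_right h01).continuous).clm_apply continuous_const
  have suppDφ2 : HasCompactSupport (fun z => fderiv ℝ (fun w => φ w ^ 2) z (ee i)) := by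
    have h1 : HasCompactSupport (fderiv ℝ (fun w => φ w ^ 2)) := hφ2c.fderiv (𝕜 := ℝ)
    exact h1.comp_left (g := fun L : E2 →L[ℝ] ℝ => L (ee i)) rfl
  have int1 : Integrable (fun z => (H z * A z) * fderiv ℝ (fun w => φ w ^ 2) z (ee i)) :=
    ((hH1.continuous.mul cA).mul cDφ2).integrable_of_hasCompactSupport suppDφ2.mul_left
  have int2 : Integrable
      (fun z => fderiv ℝ (fun z => H z * A z) z (ee i) * (φ z ^ 2)) :=
    (cDf.mul (hφ.continuous.pow 2)).integrable_of_hasCompactSupport hφ2c.mul_left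
  have int3 : Integrable (fun z => (H z * A z) * φ z ^ 2) :=
    ((hH1.continuous.mul cA).mul (hφ.continuous.pow 2)).integrable_of_hasCompactSupport
      hφ2c.mul_left
  have intX : Integrable (fun z => φ z ^ 2 * A z ^ 2) :=
    ((hφ.continuous.pow 2).mul (cA.pow 2)).integrable_of_hasCompactSupport hφ2c.mul_right
  have int4 : Integrable (fun z => (A z ^ 2 + H z * C z) * φ z ^ 2) :=
    (((cA.pow 2).add (hH1.continuous.mul cC)).mul (hφ.continuous.pow 2)
      ).integrable_of_hasCompactSupport hφ2c.mul_left
  have ibp := integral_mul_fderiv_eq_neg_fderiv_mul_of_integrable (μ := volume)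
    (f := fun z => H z * A z) (g := fun z => φ z ^ 2) (v := ee i)
    int2 int1 int3 (fun x _ => hf.differentiable one_ne_zero x)
    (fun x _ => hφ2.differentiable (by norm_num) x)
  have ibp' : ∫ z : E2, (H z * A z) * fderiv ℝ (fun w => φ w ^ 2) z (ee i)
      = - ∫ z : E2, (A z ^ 2 + H z * C z) * φ z ^ 2 := by
    rw [ibp]; congr 1
    apply integral_congr_ae
    filter_upwards with z
    have hdH : DifferentiableAt ℝ H z := hH1.differentiable one_ne_zero z
    have hdA : DifferentiableAt ℝ A z := hA.differentiable one_ne_zero z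
    rw [fderiv_fun_mul hdH hdA]
    simp only [ContinuousLinearMap.add_apply, ContinuousLinearMap.smul_apply, smul_eq_mul]
    ring
  rw [integral_add intX int1, ibp', ← sub_eq_add_neg, ← integral_sub intX int4, ← integral_neg]
  apply integral_congr_ae
  filter_upwards with z
  ring

lemma key (H φ : E2 → ℝ) (hH : ContDiff ℝ 2 H) (hφ : ContDiff ℝ 2 φ)
    (hφc : HasCompactSupport φ)
    (hlap : ∀ z, φ z ≠ 0 →
      ∑ i : Fin 2, fderiv ℝ (fun w => fderiv ℝ H w (ee i)) z (ee i) = 0) :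
    ∫ z : E2, ‖gradient (fun w => H w * φ w) z‖ ^ 2
      = ∫ z : E2, H z ^ 2 * ‖gradient φ z‖ ^ 2 := by
  have h12 : (1 : WithTop ℕ∞) + 1 ≤ 2 := by norm_num
  have h01 : (0 : WithTop ℕ∞) + 1 ≤ 1 := by norm_num
  have hH1 : ContDiff ℝ 1 H := hH.of_le one_le_two
  have hφ1 : ContDiff ℝ 1 φ := hφ.of_le one_le_two
  set A : Fin 2 → E2 → ℝ := fun i w => fderiv ℝ H w (ee i) with hA_def
  set B : Fin 2 → E2 → ℝ := fun i w => fderiv ℝ φ w (ee i) with hB_def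
  set C : Fin 2 → E2 → ℝ := fun i w => fderiv ℝ (A i) w (ee i) with hC_def
  have hA : ∀ i, ContDiff ℝ 1 (A i) := fun i =>
    (hH.fderiv_right h12).clm_apply contDiff_const
  have cB : ∀ i, Continuous (B i) := fun i =>
    ((hφ.fderiv_right h12).continuous).clm_apply continuous_const
  have cC : ∀ i, Continuous (C i) := fun i =>
    (((hA i).fderiv_right h01).continuous).clm_apply continuous_const
  have hφ2c : HasCompactSupport (fun z => φ z ^ 2) := by
    have : HasCompactSupport (φ * φ) := hφc.mul_right
    simpa [sq, Pi.mul_def] using this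
  have suppB : ∀ i, HasCompactSupport (B i) := fun i =>
    (hφc.fderiv (𝕜 := ℝ)).comp_left (g := fun L : E2 →L[ℝ] ℝ => L (ee i)) rfl
  have suppDφ2 : ∀ i, HasCompactSupport (fun z => fderiv ℝ (fun w => φ w ^ 2) z (ee i)) :=
    fun i => (hφ2c.fderiv (𝕜 := ℝ)).comp_left (g := fun L : E2 →L[ℝ] ℝ => L (ee i)) rfl
  have cDφ2 : ∀ i, Continuous (fun z => fderiv ℝ (fun w => φ w ^ 2) z (ee i)) := fun i =>
    (((hφ.pow 2).fderiv_right h12).continuous).clm_apply continuous_const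
  -- integrability of pieces
  have intG : ∀ i : Fin 2, Integrable (fun z => φ z ^ 2 * A i z ^ 2
      + (H z * A i z) * fderiv ℝ (fun w => φ w ^ 2) z (ee i)) := fun i =>
    (((hφ.continuous.pow 2).mul ((hA i).continuous.pow 2)).integrable_of_hasCompactSupport
        hφ2c.mul_right).add
      (((hH1.continuous.mul (hA i).continuous).mul (cDφ2 i)).integrable_of_hasCompactSupport
        (suppDφ2 i).mul_left)
  have intHb : ∀ i : Fin 2, Integrable (fun z => H z ^ 2 * B i z ^ 2) := fun i => by
    have hsupp : HasCompactSupport (fun z => B i z ^ 2) := by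
      have : HasCompactSupport (B i * B i) := (suppB i).mul_right
      simpa [sq, Pi.mul_def] using this
    exact ((hH1.continuous.pow 2).mul ((cB i).pow 2)).integrable_of_hasCompactSupport
      hsupp.mul_left
  have intHc : ∀ i : Fin 2, Integrable (fun z => (H z * C i z) * φ z ^ 2) := fun i =>
    ((hH1.continuous.mul (cC i)).mul (hφ.continuous.pow 2)).integrable_of_hasCompactSupport
      hφ2c.mul_left
  -- pointwise identity for the integrand
  have pt : ∀ z : E2, ‖gradient (fun w => H w * φ w) z‖ ^ 2
      = ∑ i : Fin 2, ((φ z ^ 2 * A i z ^ 2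
          + (H z * A i z) * fderiv ℝ (fun w => φ w ^ 2) z (ee i))
        + H z ^ 2 * B i z ^ 2) := by
    intro z
    have hdH : DifferentiableAt ℝ H z := hH1.differentiable one_ne_zero z
    have hdφ : DifferentiableAt ℝ φ z := hφ1.differentiable one_ne_zero z
    rw [norm_grad_sq]
    refine Finset.sum_congr rfl fun i _ => ?_
    rw [fderiv_fun_mul hdH hdφ, fderiv_sq' φ hdφ]
    simp only [ContinuousLinearMap.add_apply, ContinuousLinearMap.smul_apply, smul_eq_mul,
      hA_def, hB_def]
    ring
  calc ∫ z : E2, ‖gradient (fun w => H w * φ w) z‖ ^ 2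
      = ∫ z : E2, ∑ i : Fin 2, ((φ z ^ 2 * A i z ^ 2
          + (H z * A i z) * fderiv ℝ (fun w => φ w ^ 2) z (ee i))
        + H z ^ 2 * B i z ^ 2) := integral_congr_ae (Filter.Eventually.of_forall pt)
    _ = ∑ i : Fin 2, ∫ z : E2, ((φ z ^ 2 * A i z ^ 2
          + (H z * A i z) * fderiv ℝ (fun w => φ w ^ 2) z (ee i))
        + H z ^ 2 * B i z ^ 2) :=
      integral_finset_sum _ (fun i _ => (intG i).add (intHb i))
    _ = ∑ i : Fin 2, ((- ∫ z : E2, (H z * C i z) * φ z ^ 2)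
          + ∫ z : E2, H z ^ 2 * B i z ^ 2) := by
      refine Finset.sum_congr rfl fun i _ => ?_
      rw [integral_add (intG i) (intHb i), ibp_i H φ hH hφ hφc i]
    _ = (- ∫ z : E2, ∑ i : Fin 2, (H z * C i z) * φ z ^ 2)
          + ∑ i : Fin 2, ∫ z : E2, H z ^ 2 * B i z ^ 2 := by
      rw [Finset.sum_add_distrib]
      congr 1
      rw [integral_finset_sum _ (fun i _ => intHc i)]
      exact Finset.sum_neg_distrib _
    _ = ∫ z : E2, H z ^ 2 * ‖gradient φ z‖ ^ 2 := by
      have hz : ∀ z : E2, ∑ i : Fin 2, (H z * C i z) * φ z ^ 2 = 0 := by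
        intro z
        by_cases hzφ : φ z = 0
        · simp [hzφ]
        · have := hlap z hzφ
          calc ∑ i : Fin 2, (H z * C i z) * φ z ^ 2
              = (H z * φ z ^ 2) * ∑ i : Fin 2, C i z := by
                rw [Finset.mul_sum]; exact Finset.sum_congr rfl fun i _ => by ring
            _ = 0 := by rw [hC_def, hA_def] at *; rw [this]; ring
      rw [integral_congr_ae (Filter.Eventually.of_forall hz)]
      simp only [integral_zero, neg_zero, zero_add]
      rw [← integral_finset_sum _ (fun i _ => intHb i)]
      apply integral_congr_ae
      filter_upwards with z
      rw [norm_grad_sq, Finset.mul_sum]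

lemma exists_cutoff (U : Set E2) (hU : IsOpen U) (K : Set E2) (hK : IsCompact K) (hKU : K ⊆ U) :
    ∃ ψ : E2 → ℝ, ContDiff ℝ 2 ψ ∧ HasCompactSupport ψ ∧ tsupport ψ ⊆ U ∧
      ∃ V : Set E2, IsOpen V ∧ K ⊆ V ∧ V ⊆ U ∧ EqOn ψ 1 V := by
  obtain ⟨t, htc, hKt, htU⟩ := exists_compact_between hK hU hKU
  obtain ⟨f, hf1, hf0, -⟩ := exists_contMDiffMap_one_nhds_of_subset_interior (𝓘(ℝ, E2)) (n := (⊤ : ℕ∞))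
    hK.isClosed hKt
  obtain ⟨V₀, hV₀o, hKV₀, hV₀⟩ := eventually_nhdsSet_iff_exists.mp hf1
  have hsupp : support (f : E2 → ℝ) ⊆ t := fun x hx => by_contra fun hxt => hx (hf0 x hxt)
  refine ⟨f, ?_, ?_, ?_, V₀ ∩ U, hV₀o.inter hU, subset_inter hKV₀ hKU, inter_subset_right,
    fun x hx => hV₀ x hx.1⟩
  · exact (contMDiff_iff_contDiff.mp f.contMDiff).of_le (WithTop.coe_le_coe.mpr le_top)
  · exact HasCompactSupport.of_support_subset_isCompact htc hsupp
  · exact (closure_minimal hsupp htc.isClosed).trans htU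

end DirichletAux

open DirichletAux Set Function in
/-- **Dirichlet energy identity for a harmonic function times a cutoff.** -/
theorem dirichlet_energy_harmonic_cutoff
    (U : Set (EuclideanSpace ℝ (Fin 2))) (hU : IsOpen U)
    (h φ : EuclideanSpace ℝ (Fin 2) → ℝ)
    (hh : ContDiffOn ℝ 2 h U) (hharm : ∀ z ∈ U, lap2 h z = 0)
    (hφ : ContDiff ℝ (⊤ : ℕ∞) φ) (hφc : HasCompactSupport φ) (hφU : tsupport φ ⊆ U) :
    (∫ z in U, ‖gradient (fun w => h w * φ w) z‖ ^ 2)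
        = (∫ z in U, h z ^ 2 * ‖gradient φ z‖ ^ 2) ∧
      (∫ z in U, ‖gradient (fun w => h w * φ w) z‖ ^ 2)
        = ∫ z in U, (1 / 2 * lap2 (fun w => φ w ^ 2) z - φ z * lap2 φ z) * h z ^ 2 := by
  have hφ2 : ContDiff ℝ 2 φ := hφ.of_le (WithTop.coe_le_coe.mpr le_top)
  obtain ⟨ψ, hψ2, hψc, hψU, V, hVo, hKV, hVU, hψ1⟩ := exists_cutoff U hU (tsupport φ) hφc hφU
  set H : E2 → ℝ := fun z => ψ z * h z with hH_def
  have hHc : HasCompactSupport H := hψc.mul_right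
  have hH2 : ContDiff ℝ 2 H := by
    rw [contDiff_iff_contDiffAt]
    intro z
    by_cases hz : z ∈ U
    · exact hψ2.contDiffAt.mul (hh.contDiffAt (hU.mem_nhds hz))
    · have hzs : z ∉ tsupport ψ := fun hzs => hz (hψU hzs)
      have hev0 : H =ᶠ[nhds z] (fun _ => (0:ℝ)) := by
        filter_upwards [(isClosed_tsupport ψ).isOpen_compl.mem_nhds hzs] with w hw
        simp [hH_def, image_eq_zero_of_notMem_tsupport hw]
      exact contDiffAt_const.congr_of_eventuallyEq hev0
  have hEq : EqOn H h V := fun x hx => by simp [hH_def, hψ1 hx]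
  have hHφeq : (fun w => h w * φ w) = (fun w => H w * φ w) := by
    funext w
    by_cases hw : w ∈ tsupport φ
    · rw [hEq (hKV hw)]
    · simp [image_eq_zero_of_notMem_tsupport hw]
  have hcompl : ∀ z, z ∉ tsupport φ → gradient (fun w => H w * φ w) z = 0 := by
    intro z hz
    apply grad_zero
    exact fderiv_zero_on (isClosed_tsupport φ).isOpen_compl
      (fun x hx => by simp [image_eq_zero_of_notMem_tsupport hx]) hz
  have hgradφ : ∀ z, z ∉ tsupport φ → gradient φ z = 0 := fun z hz =>
    grad_zero (fderiv_zero_on (isClosed_tsupport φ).isOpen_compl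
      (fun x hx => image_eq_zero_of_notMem_tsupport hx) hz)
  have hlap : ∀ z, φ z ≠ 0 →
      ∑ i : Fin 2, fderiv ℝ (fun w => fderiv ℝ H w (ee i)) z (ee i) = 0 := by
    intro z hz
    have hzt : z ∈ tsupport φ := subset_tsupport φ (mem_support.mpr hz)
    have hzV : z ∈ V := hKV hzt
    have hDeq : ∀ i : Fin 2, fderiv ℝ (fun w => fderiv ℝ H w (ee i)) z (ee i)
        = fderiv ℝ (fun w => fderiv ℝ h w (ee i)) z (ee i) := by
      intro i
      have h1 : (fun w => fderiv ℝ H w (ee i)) =ᶠ[nhds z]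
          (fun w => fderiv ℝ h w (ee i)) := by
        filter_upwards [hVo.mem_nhds hzV] with w hw
        have hev : H =ᶠ[nhds w] h := Filter.eventuallyEq_of_mem (hVo.mem_nhds hw) hEq
        rw [hev.fderiv_eq]
      rw [h1.fderiv_eq]
    rw [Finset.sum_congr rfl fun i _ => hDeq i]
    have := hharm z (hφU hzt)
    simpa [lap2] using this
  have s1 : (∫ z in U, ‖gradient (fun w => H w * φ w) z‖ ^ 2)
      = ∫ z : E2, ‖gradient (fun w => H w * φ w) z‖ ^ 2 :=
    setIntegral_eq_integral_of_forall_compl_eq_zero (fun z hz => by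
      rw [hcompl z (fun hmem => hz (hφU hmem))]; simp)
  have s2 : (∫ z in U, H z ^ 2 * ‖gradient φ z‖ ^ 2)
      = ∫ z : E2, H z ^ 2 * ‖gradient φ z‖ ^ 2 :=
    setIntegral_eq_integral_of_forall_compl_eq_zero (fun z hz => by
      rw [hgradφ z (fun hmem => hz (hφU hmem))]; simp)
  have s3 : (∫ z in U, h z ^ 2 * ‖gradient φ z‖ ^ 2)
      = ∫ z in U, H z ^ 2 * ‖gradient φ z‖ ^ 2 := by
    have hpt : ∀ z, h z ^ 2 * ‖gradient φ z‖ ^ 2 = H z ^ 2 * ‖gradient φ z‖ ^ 2 := by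
      intro z
      by_cases hz : z ∈ tsupport φ
      · rw [hEq (hKV hz)]
      · rw [hgradφ z hz]; simp
    simp only [hpt]
  have part1 : (∫ z in U, ‖gradient (fun w => h w * φ w) z‖ ^ 2)
      = ∫ z in U, h z ^ 2 * ‖gradient φ z‖ ^ 2 := by
    rw [hHφeq, s1, key H φ hH2 hφ2 hφc hlap, s3, s2]
  have part2 : (∫ z in U, (1 / 2 * lap2 (fun w => φ w ^ 2) z - φ z * lap2 φ z) * h z ^ 2)
      = ∫ z in U, h z ^ 2 * ‖gradient φ z‖ ^ 2 := by
    have hpt : ∀ z, (1 / 2 * lap2 (fun w => φ w ^ 2) z - φ z * lap2 φ z) * h z ^ 2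
        = h z ^ 2 * ‖gradient φ z‖ ^ 2 := fun z => by
      rw [lap_identity φ hφ2 z]; ring
    simp only [hpt]
  exact ⟨part1, part1.trans part2.symm⟩
end
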